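/- arXiv:math/0601124 — 5 statements merged into one kernel-verified Lean document; each statement's English description precedes it below -/
import Mathlib

section
/- Let k ≥ 2 and 0 ≤ N ≤ k be integers, and let μ be the uniform measure on the set of configurations η : {1, …, k} → {0, 1} with Σ_{x=1}^{k} η_x = N. Let ρ₁, …, ρ_{k−1} be positive real numbers with Σ_{x=1}^{k−1} ρ_x = 1. Then for every function f : {0,1}^{{1,…,k}} → ℝ, E_μ[(∇_{1,k} f)²] ≤ Σ_{x=1}^{k−1} ρ_x^{-1} E_μ[(∇_{x,x+1} f)²], with no extra multiplicative constant. -/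
noncomputable section

/-- `T_{xy}η`: the configuration (given by its set of occupied sites) with the occupation
numbers at `x` and `y` exchanged. -/
def exch (x y : ℕ) (S : Finset ℕ) : Finset ℕ := S.image (Equiv.swap x y)

/-- `∇_{xy} f (η) = f(T_{xy}η) - f(η)`. -/
def grad (x y : ℕ) (f : Finset ℕ → ℝ) (S : Finset ℕ) : ℝ := f (exch x y S) - f S

/-- Expectation under the uniform measure on configurations on `{1,…,k}` with exactly `N`
particles. -/
def unifE (k N : ℕ) (g : Finset ℕ → ℝ) : ℝ :=
  (∑ S ∈ (Finset.Icc 1 k).powersetCard N, g S) / (((Finset.Icc 1 k).powersetCard N).card : ℝ)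

lemma mem_exch {a x y : ℕ} {S : Finset ℕ} : a ∈ exch x y S ↔ Equiv.swap x y a ∈ S := by
  constructor
  · intro h
    rcases Finset.mem_image.1 h with ⟨b, hb, rfl⟩
    simpa using hb
  · intro h
    exact Finset.mem_image.2 ⟨_, h, Equiv.swap_apply_self _ _ _⟩

lemma exch_exch (x y : ℕ) (S : Finset ℕ) : exch x y (exch x y S) = S := by
  ext a; simp [mem_exch]

lemma exch_eq_self {x y : ℕ} {S : Finset ℕ} (h : (x ∈ S ↔ y ∈ S)) : exch x y S = S := by
  ext a
  rw [mem_exch]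
  rcases eq_or_ne a x with rfl | hax
  · rw [Equiv.swap_apply_left]; exact h.symm
  rcases eq_or_ne a y with rfl | hay
  · rw [Equiv.swap_apply_right]; exact h
  · rw [Equiv.swap_apply_of_ne_of_ne hax hay]

lemma exch_comp₁ {u v w : ℕ} (huv : u ≠ v) (huw : u ≠ w) (hvw : v ≠ w) {S : Finset ℕ}
    (h : (u ∈ S ↔ v ∈ S)) : exch u w S = exch u v (exch v w S) := by
  ext a
  rw [mem_exch, mem_exch, mem_exch]
  rcases eq_or_ne a u with rfl | hau
  · rw [Equiv.swap_apply_left, Equiv.swap_apply_left, Equiv.swap_apply_left]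
  rcases eq_or_ne a v with rfl | hav
  · rw [Equiv.swap_apply_of_ne_of_ne (Ne.symm huv) hvw, Equiv.swap_apply_right,
      Equiv.swap_apply_of_ne_of_ne huv huw]
    exact h.symm
  rcases eq_or_ne a w with rfl | haw
  · rw [Equiv.swap_apply_right, Equiv.swap_apply_of_ne_of_ne (Ne.symm huw) (Ne.symm hvw),
      Equiv.swap_apply_right]
    exact h
  · rw [Equiv.swap_apply_of_ne_of_ne hau haw, Equiv.swap_apply_of_ne_of_ne hau hav,
      Equiv.swap_apply_of_ne_of_ne hav haw]

lemma exch_comp₂ {u v w : ℕ} (huv : u ≠ v) (huw : u ≠ w) (hvw : v ≠ w) {S : Finset ℕ}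
    (h : (v ∈ S ↔ w ∈ S)) : exch u w S = exch v w (exch u v S) := by
  ext a
  rw [mem_exch, mem_exch, mem_exch]
  rcases eq_or_ne a u with rfl | hau
  · rw [Equiv.swap_apply_left, Equiv.swap_apply_of_ne_of_ne huv huw, Equiv.swap_apply_left]
    exact h.symm
  rcases eq_or_ne a v with rfl | hav
  · rw [Equiv.swap_apply_of_ne_of_ne (Ne.symm huv) hvw, Equiv.swap_apply_left,
      Equiv.swap_apply_of_ne_of_ne (Ne.symm huw) (Ne.symm hvw)]
    exact h
  rcases eq_or_ne a w with rfl | haw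
  · rw [Equiv.swap_apply_right, Equiv.swap_apply_right, Equiv.swap_apply_right]
  · rw [Equiv.swap_apply_of_ne_of_ne hau haw, Equiv.swap_apply_of_ne_of_ne hav haw,
      Equiv.swap_apply_of_ne_of_ne hau hav]

lemma exch_mem {k N x y : ℕ} (hx : x ∈ Finset.Icc 1 k) (hy : y ∈ Finset.Icc 1 k)
    {S : Finset ℕ} (hS : S ∈ (Finset.Icc 1 k).powersetCard N) :
    exch x y S ∈ (Finset.Icc 1 k).powersetCard N := by
  rw [Finset.mem_powersetCard] at hS ⊢
  refine ⟨?_, ?_⟩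
  · intro a ha
    rcases Finset.mem_image.1 ha with ⟨b, hb, rfl⟩
    rcases eq_or_ne b x with rfl | hbx
    · rwa [Equiv.swap_apply_left]
    rcases eq_or_ne b y with rfl | hby
    · rwa [Equiv.swap_apply_right]
    · rw [Equiv.swap_apply_of_ne_of_ne hbx hby]; exact hS.1 hb
  · rw [exch, Finset.card_image_of_injective _ (Equiv.injective _)]; exact hS.2

lemma weighted_sq {p q a b : ℝ} (hp : 0 < p) (hq : 0 < q) :
    (a + b) ^ 2 ≤ (p + q) / p * a ^ 2 + (p + q) / q * b ^ 2 := by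
  rw [div_mul_eq_mul_div, div_mul_eq_mul_div, div_add_div _ _ (ne_of_gt hp) (ne_of_gt hq),
    le_div_iff₀ (by positivity)]
  nlinarith [sq_nonneg (q * a - p * b)]

lemma sum_comp_le {Ω T : Finset (Finset ℕ)} (φ : Finset ℕ → Finset ℕ)
    (hmem : ∀ S ∈ T, φ S ∈ Ω) (hinj : ∀ S ∈ T, ∀ S' ∈ T, φ S = φ S' → S = S')
    (F : Finset ℕ → ℝ) (hF : ∀ S, 0 ≤ F S) :
    ∑ S ∈ T, F (φ S) ≤ ∑ S ∈ Ω, F S := by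
  rw [← Finset.sum_image hinj]
  apply Finset.sum_le_sum_of_subset_of_nonneg
  · intro ζ hζ
    rcases Finset.mem_image.1 hζ with ⟨S, hS, rfl⟩
    exact hmem S hS
  · intro _ _ _; exact hF _

lemma key (k N : ℕ) (f : Finset ℕ → ℝ) :
    ∀ m : ℕ, 1 ≤ m → m + 1 ≤ k → ∀ ρ : ℕ → ℝ, (∀ x ∈ Finset.Icc 1 m, 0 < ρ x) →
    ∑ S ∈ (Finset.Icc 1 k).powersetCard N, (grad 1 (m + 1) f S) ^ 2 ≤
      (∑ x ∈ Finset.Icc 1 m, ρ x) *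
        ∑ x ∈ Finset.Icc 1 m, (ρ x)⁻¹ *
          ∑ S ∈ (Finset.Icc 1 k).powersetCard N, (grad x (x + 1) f S) ^ 2 := by
  classical
  refine Nat.le_induction ?_ ?_
  · -- base case m = 1
    intro hk ρ hρ
    have h1 : (0:ℝ) < ρ 1 := hρ 1 (Finset.mem_Icc.2 (by omega))
    simp only [Finset.Icc_self, Finset.sum_singleton]
    rw [← mul_assoc, mul_inv_cancel₀ (ne_of_gt h1), one_mul]
  · -- inductive step
    intro m hm IH hk ρ hρ
    set Ω := (Finset.Icc 1 k).powersetCard N with hΩ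
    have hm1k : m + 1 ≤ k := by omega
    have hρ' : ∀ x ∈ Finset.Icc 1 m, 0 < ρ x := by
      intro x hx
      simp only [Finset.mem_Icc] at hx
      exact hρ x (Finset.mem_Icc.2 (by omega))
    have hq : (0:ℝ) < ρ (m + 1) := hρ (m + 1) (Finset.mem_Icc.2 (by omega))
    set p := ∑ x ∈ Finset.Icc 1 m, ρ x with hpdef
    have hp : (0:ℝ) < p := Finset.sum_pos hρ' ⟨1, Finset.mem_Icc.2 (by omega)⟩
    set q := ρ (m + 1) with hqdef
    -- distinctness
    have h1v : (1:ℕ) ≠ m + 1 := by omega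
    have h1w : (1:ℕ) ≠ m + 2 := by omega
    have hvw : m + 1 ≠ m + 2 := by omega
    -- membership facts
    have mem1 : (1:ℕ) ∈ Finset.Icc 1 k := Finset.mem_Icc.2 (by omega)
    have memv : m + 1 ∈ Finset.Icc 1 k := Finset.mem_Icc.2 (by omega)
    have memw : m + 2 ∈ Finset.Icc 1 k := Finset.mem_Icc.2 (by omega)
    -- the maps
    set φ : Finset ℕ → Finset ℕ :=
      fun S => if (1 ∈ S ↔ m + 1 ∈ S) then exch (m + 1) (m + 2) S else S with hφ
    set ψ : Finset ℕ → Finset ℕ :=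
      fun S => if (1 ∈ S ↔ m + 1 ∈ S) then S else exch 1 (m + 1) S with hψ
    set T := Ω.filter (fun S => ¬ (1 ∈ S ↔ m + 2 ∈ S)) with hT
    -- restrict to T
    have step1 : ∑ S ∈ Ω, (grad 1 (m + 2) f S) ^ 2
        = ∑ S ∈ T, (grad 1 (m + 2) f S) ^ 2 := by
      rw [hT]
      refine (Finset.sum_filter_of_ne ?_).symm
      intro S _ hne
      intro hcontra
      apply hne
      rw [grad, exch_eq_self hcontra]
      simp
    -- pointwise bound on T
    have step2 : ∀ S ∈ T, (grad 1 (m + 2) f S) ^ 2 ≤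
        (p + q) / p * (grad 1 (m + 1) f (φ S)) ^ 2
          + (p + q) / q * (grad (m + 1) (m + 2) f (ψ S)) ^ 2 := by
      intro S hS
      rw [hT, Finset.mem_filter] at hS
      by_cases hc : (1 ∈ S ↔ m + 1 ∈ S)
      · have hgr : grad 1 (m + 2) f S
            = grad 1 (m + 1) f (exch (m + 1) (m + 2) S) + grad (m + 1) (m + 2) f S := by
          simp only [grad]
          rw [exch_comp₁ h1v h1w hvw hc]
          ring
        rw [hgr, hφ, hψ]
        simp only [if_pos hc]
        exact weighted_sq hp hq
      · have hc2 : (m + 1 ∈ S ↔ m + 2 ∈ S) := by tauto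
        have hgr : grad 1 (m + 2) f S
            = grad 1 (m + 1) f S + grad (m + 1) (m + 2) f (exch 1 (m + 1) S) := by
          simp only [grad]
          rw [exch_comp₂ h1v h1w hvw hc2]
          ring
        rw [hgr, hφ, hψ]
        simp only [if_neg hc]
        exact weighted_sq hp hq
    -- injectivity transfers
    have hTsub : ∀ S ∈ T, S ∈ Ω := by
      intro S hS; rw [hT, Finset.mem_filter] at hS; exact hS.1
    have transφ : ∑ S ∈ T, (grad 1 (m + 1) f (φ S)) ^ 2
        ≤ ∑ S ∈ Ω, (grad 1 (m + 1) f S) ^ 2 := by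
      refine sum_comp_le φ ?_ ?_ (fun S => (grad 1 (m + 1) f S) ^ 2) ?_
      · intro S hS
        rw [hφ]
        by_cases hc : (1 ∈ S ↔ m + 1 ∈ S)
        · simp only [if_pos hc]; exact exch_mem memv memw (hTsub S hS)
        · simp only [if_neg hc]; exact hTsub S hS
      · intro S hS S' hS' heq
        have hDS : ¬ (1 ∈ S ↔ m + 2 ∈ S) := (Finset.mem_filter.1 hS).2
        have hDS' : ¬ (1 ∈ S' ↔ m + 2 ∈ S') := (Finset.mem_filter.1 hS').2
        -- invariant of each branch
        have inv : ∀ X : Finset ℕ, ¬ (1 ∈ X ↔ m + 2 ∈ X) →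
            ((1 ∈ X ↔ m + 1 ∈ X) → ((1 ∈ φ X) ↔ (m + 2 ∈ φ X))) ∧
            (¬ (1 ∈ X ↔ m + 1 ∈ X) → ¬ ((1 ∈ φ X) ↔ (m + 2 ∈ φ X))) := by
          intro X hDX
          constructor
          · intro hc
            rw [hφ]
            simp only [if_pos hc, mem_exch,
              Equiv.swap_apply_of_ne_of_ne h1v h1w, Equiv.swap_apply_right]
            exact hc
          · intro hc
            rw [hφ]
            simp only [if_neg hc]
            exact hDX
        by_cases hc : (1 ∈ S ↔ m + 1 ∈ S) <;> by_cases hc' : (1 ∈ S' ↔ m + 1 ∈ S')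
        · rw [hφ] at heq
          simp only [if_pos hc, if_pos hc'] at heq
          have := congrArg (exch (m + 1) (m + 2)) heq
          rwa [exch_exch, exch_exch] at this
        · exact absurd (heq ▸ (inv S hDS).1 hc) ((inv S' hDS').2 hc')
        · exact absurd (heq ▸ (inv S hDS).2 hc) (not_not_intro ((inv S' hDS').1 hc'))
        · rw [hφ] at heq
          simpa only [if_neg hc, if_neg hc'] using heq
      · intro S; positivity
    have transψ : ∑ S ∈ T, (grad (m + 1) (m + 2) f (ψ S)) ^ 2
        ≤ ∑ S ∈ Ω, (grad (m + 1) (m + 2) f S) ^ 2 := by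
      refine sum_comp_le ψ ?_ ?_ (fun S => (grad (m + 1) (m + 2) f S) ^ 2) ?_
      · intro S hS
        rw [hψ]
        by_cases hc : (1 ∈ S ↔ m + 1 ∈ S)
        · simp only [if_pos hc]; exact hTsub S hS
        · simp only [if_neg hc]; exact exch_mem mem1 memv (hTsub S hS)
      · intro S hS S' hS' heq
        have inv : ∀ X : Finset ℕ,
            ((1 ∈ X ↔ m + 1 ∈ X) → ((1 ∈ ψ X) ↔ (m + 1 ∈ ψ X))) ∧
            (¬ (1 ∈ X ↔ m + 1 ∈ X) → ¬ ((1 ∈ ψ X) ↔ (m + 1 ∈ ψ X))) := by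
          intro X
          constructor
          · intro hc
            rw [hψ]; simp only [if_pos hc]; exact hc
          · intro hc
            rw [hψ]
            simp only [if_neg hc, mem_exch, Equiv.swap_apply_left, Equiv.swap_apply_right]
            tauto
        by_cases hc : (1 ∈ S ↔ m + 1 ∈ S) <;> by_cases hc' : (1 ∈ S' ↔ m + 1 ∈ S')
        · rw [hψ] at heq
          simpa only [if_pos hc, if_pos hc'] using heq
        · exact absurd (heq ▸ (inv S).1 hc) ((inv S').2 hc')
        · exact absurd (heq ▸ (inv S).2 hc) (not_not_intro ((inv S').1 hc'))
        · rw [hψ] at heq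
          simp only [if_neg hc, if_neg hc'] at heq
          have := congrArg (exch 1 (m + 1)) heq
          rwa [exch_exch, exch_exch] at this
      · intro S; positivity
    -- combine
    have step3 : ∑ S ∈ Ω, (grad 1 (m + 2) f S) ^ 2 ≤
        (p + q) / p * ∑ S ∈ Ω, (grad 1 (m + 1) f S) ^ 2
          + (p + q) / q * ∑ S ∈ Ω, (grad (m + 1) (m + 2) f S) ^ 2 := by
      rw [step1]
      calc ∑ S ∈ T, (grad 1 (m + 2) f S) ^ 2
          ≤ ∑ S ∈ T, ((p + q) / p * (grad 1 (m + 1) f (φ S)) ^ 2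
              + (p + q) / q * (grad (m + 1) (m + 2) f (ψ S)) ^ 2) :=
            Finset.sum_le_sum step2
        _ = (p + q) / p * ∑ S ∈ T, (grad 1 (m + 1) f (φ S)) ^ 2
              + (p + q) / q * ∑ S ∈ T, (grad (m + 1) (m + 2) f (ψ S)) ^ 2 := by
            rw [Finset.sum_add_distrib, Finset.mul_sum, Finset.mul_sum]
        _ ≤ (p + q) / p * ∑ S ∈ Ω, (grad 1 (m + 1) f S) ^ 2
              + (p + q) / q * ∑ S ∈ Ω, (grad (m + 1) (m + 2) f S) ^ 2 := by
            have h1 : (0:ℝ) ≤ (p + q) / p := by positivity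
            have h2 : (0:ℝ) ≤ (p + q) / q := by positivity
            gcongr
    have hIH := IH hm1k ρ hρ'
    have final : ∑ S ∈ Ω, (grad 1 (m + 2) f S) ^ 2 ≤
        (p + q) * (∑ x ∈ Finset.Icc 1 m, (ρ x)⁻¹ * ∑ S ∈ Ω, (grad x (x + 1) f S) ^ 2
          + q⁻¹ * ∑ S ∈ Ω, (grad (m + 1) (m + 2) f S) ^ 2) := by
      refine step3.trans ?_
      have e1 : (p + q) / p * ((∑ x ∈ Finset.Icc 1 m, ρ x) *
          ∑ x ∈ Finset.Icc 1 m, (ρ x)⁻¹ * ∑ S ∈ Ω, (grad x (x + 1) f S) ^ 2)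
          = (p + q) * ∑ x ∈ Finset.Icc 1 m, (ρ x)⁻¹ * ∑ S ∈ Ω, (grad x (x + 1) f S) ^ 2 := by
        rw [← hpdef, div_eq_mul_inv, mul_assoc, ← mul_assoc p⁻¹, inv_mul_cancel₀ hp.ne',
          one_mul]
      have e2 : (p + q) / q * ∑ S ∈ Ω, (grad (m + 1) (m + 2) f S) ^ 2
          = (p + q) * (q⁻¹ * ∑ S ∈ Ω, (grad (m + 1) (m + 2) f S) ^ 2) := by
        rw [div_eq_mul_inv, mul_assoc]
      rw [mul_add, ← e1, ← e2]
      have h1 : (0:ℝ) ≤ (p + q) / p := by positivity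
      gcongr
    -- rewrite RHS sums over Icc 1 (m+1)
    rw [Finset.sum_Icc_succ_top (by omega : 1 ≤ m + 1),
      Finset.sum_Icc_succ_top (by omega : 1 ≤ m + 1)]
    exact final

theorem stmt_2 (k N : ℕ) (hk : 2 ≤ k) (hN : N ≤ k)
    (ρ : ℕ → ℝ) (hρ : ∀ x ∈ Finset.Icc 1 (k - 1), 0 < ρ x)
    (hρsum : ∑ x ∈ Finset.Icc 1 (k - 1), ρ x = 1)
    (f : Finset ℕ → ℝ) :
    unifE k N (fun S => (grad 1 k f S) ^ 2) ≤
      ∑ x ∈ Finset.Icc 1 (k - 1), (ρ x)⁻¹ * unifE k N (fun S => (grad x (x + 1) f S) ^ 2) := by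
  have hc : (0:ℝ) < (((Finset.Icc 1 k).powersetCard N).card : ℝ) := by
    rw [Finset.card_powersetCard, Nat.card_Icc]
    exact_mod_cast Nat.choose_pos (by omega : N ≤ k + 1 - 1)
  have hkey := key k N f (k - 1) (by omega) (by omega) ρ hρ
  rw [(by omega : k - 1 + 1 = k)] at hkey
  rw [hρsum, one_mul] at hkey
  simp only [unifE]
  rw [show ∑ x ∈ Finset.Icc 1 (k - 1), (ρ x)⁻¹ *
      ((∑ S ∈ (Finset.Icc 1 k).powersetCard N, (grad x (x + 1) f S) ^ 2) /
        (((Finset.Icc 1 k).powersetCard N).card : ℝ))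
      = (∑ x ∈ Finset.Icc 1 (k - 1), (ρ x)⁻¹ *
          ∑ S ∈ (Finset.Icc 1 k).powersetCard N, (grad x (x + 1) f S) ^ 2) /
        (((Finset.Icc 1 k).powersetCard N).card : ℝ) by
    rw [Finset.sum_div]
    exact Finset.sum_congr rfl fun x _ => (mul_div_assoc _ _ _).symm]
  exact div_le_div_of_nonneg_right hkey hc.le
end
end

section
/- Let 0 < δ ≤ 1/2. There exists a constant C = C(δ) < ∞ with the following property. Let S be a finite set, P a product measure on {0,1}^S with δ ≤ P(η_z = 1) ≤ 1 − δ for every z ∈ S, let Λ₁ and Λ₂ be disjoint subsets of S, let x ∈ S \ (Λ₁ ∪ Λ₂) and y ∈ Λ₂. Then for every function f of the variables η_z, z ∈ Λ₁ ∪ Λ₂ ∪ {x}, and every value of the configuration on Λ₁, E[ (∇_{xy} E[f | η_{Λ₁∪{x}}])² | η_{Λ₁} ] ≤ C { |Λ₂|^{-1} E[ (f − E[f | η_{Λ₁}])² | η_{Λ₁} ] + Av_{z∈Λ₂} E[ (∇_{xz} f)² | η_{Λ₁} ] }, where E[· | η_A] denotes conditional expectation given the coordinates in A and Av denotes the average.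 -/
noncomputable section

/-- `T_{xy}η`: the configuration (given by its set of occupied sites) with the occupation
numbers at `x` and `y` exchanged. -/
def exchV {ι : Type*} [DecidableEq ι] (x y : ι) (S : Finset ι) : Finset ι :=
  S.image (Equiv.swap x y)

/-- `∇_{xy} f (η) = f(T_{xy}η) - f(η)`. -/
def gradV {ι : Type*} [DecidableEq ι] (x y : ι) (f : Finset ι → ℝ) (S : Finset ι) : ℝ :=
  f (exchV x y S) - f S

/-- The product-measure weight of the configuration `A` on the region `U`:
`∏_{z ∈ A} p_z ∏_{z ∈ U \ A} (1 - p_z)`. -/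
def wOn {ι : Type*} [DecidableEq ι] (p : ι → ℝ) (U A : Finset ι) : ℝ :=
  (∏ z ∈ A, p z) * ∏ z ∈ U \ A, (1 - p z)

/-- Conditional expectation `E[f | η_B](S)` under the product measure with marginals `p`:
the configuration is fixed to agree with `S` on `B` and integrated out elsewhere. -/
def condE {ι : Type*} [Fintype ι] [DecidableEq ι] (p : ι → ℝ) (B : Finset ι)
    (f : Finset ι → ℝ) (S : Finset ι) : ℝ :=
  ∑ A ∈ (Finset.univ \ B).powerset, wOn p (Finset.univ \ B) A * f ((S ∩ B) ∪ A)

namespace Stmt7Aux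

open Finset

variable {ι : Type} [DecidableEq ι]

/-- weighted expectation over configurations on `U`. -/
def EE (p : ι → ℝ) (U : Finset ι) (F : Finset ι → ℝ) : ℝ :=
  ∑ A ∈ U.powerset, wOn p U A * F A

theorem mem_exchV {x y a : ι} {T : Finset ι} :
    a ∈ exchV x y T ↔ Equiv.swap x y a ∈ T := by
  constructor
  · rintro h
    rcases Finset.mem_image.mp h with ⟨b, hb, hba⟩
    have : Equiv.swap x y a = b := by rw [← hba, Equiv.swap_apply_self]
    rwa [this]
  · intro h
    exact Finset.mem_image.mpr ⟨_, h, Equiv.swap_apply_self _ _ _⟩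

variable {p : ι → ℝ} {U : Finset ι}

theorem wOn_nonneg (h0 : ∀ z, 0 ≤ p z) (h1 : ∀ z, p z ≤ 1) (A : Finset ι) :
    0 ≤ wOn p U A := by
  apply mul_nonneg
  · exact Finset.prod_nonneg fun z _ => h0 z
  · exact Finset.prod_nonneg fun z _ => by linarith [h1 z]

theorem EE_one (h : ∀ z, (0:ℝ) ≤ p z) : EE p U (fun _ => 1) = 1 := by
  have := Finset.prod_add p (fun z => 1 - p z) U
  simp only [EE, mul_one, wOn]
  rw [← this]
  simp

theorem EE_congr {F G : Finset ι → ℝ} (h : ∀ A ∈ U.powerset, F A = G A) :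
    EE p U F = EE p U G :=
  Finset.sum_congr rfl fun A hA => by rw [h A hA]

theorem EE_add (F G : Finset ι → ℝ) :
    EE p U (fun A => F A + G A) = EE p U F + EE p U G := by
  simp [EE, mul_add, Finset.sum_add_distrib]

theorem EE_sub (F G : Finset ι → ℝ) :
    EE p U (fun A => F A - G A) = EE p U F - EE p U G := by
  simp [EE, mul_sub, Finset.sum_sub_distrib]

theorem EE_const_mul (c : ℝ) (F : Finset ι → ℝ) :
    EE p U (fun A => c * F A) = c * EE p U F := by
  simp only [EE, Finset.mul_sum]
  exact Finset.sum_congr rfl fun A _ => by ring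

theorem EE_const (h : ∀ z, (0:ℝ) ≤ p z) (c : ℝ) : EE p U (fun _ => c) = c := by
  have := EE_const_mul (p := p) (U := U) c (fun _ => 1)
  simpa [EE_one h] using this

theorem EE_le (h0 : ∀ z, 0 ≤ p z) (h1 : ∀ z, p z ≤ 1) {F G : Finset ι → ℝ}
    (h : ∀ A ∈ U.powerset, F A ≤ G A) : EE p U F ≤ EE p U G :=
  Finset.sum_le_sum fun A hA => mul_le_mul_of_nonneg_left (h A hA) (wOn_nonneg h0 h1 A)

theorem EE_nonneg (h0 : ∀ z, 0 ≤ p z) (h1 : ∀ z, p z ≤ 1) {F : Finset ι → ℝ}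
    (h : ∀ A ∈ U.powerset, 0 ≤ F A) : 0 ≤ EE p U F := by
  have := EE_le h0 h1 (p := p) (U := U) (F := fun _ => 0) (G := F) (by simpa using h)
  simpa [EE_const h0 0] using this

theorem EE_sum {κ : Type*} (T : Finset κ) (F : κ → Finset ι → ℝ) :
    EE p U (fun A => ∑ z ∈ T, F z A) = ∑ z ∈ T, EE p U (F z) := by
  simp only [EE, Finset.mul_sum]
  exact Finset.sum_comm

/-- Integrating out the site `z ∈ U`. -/
theorem EE_erase {z : ι} (hz : z ∈ U) (F : Finset ι → ℝ) :
    EE p U F = EE p (U.erase z)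
      (fun A => p z * F (insert z A) + (1 - p z) * F A) := by
  have hzn : z ∉ U.erase z := Finset.notMem_erase z U
  have hU : U = insert z (U.erase z) := (Finset.insert_erase hz).symm
  unfold EE
  conv_lhs => rw [hU]
  rw [Finset.sum_powerset_insert hzn]
  rw [← Finset.sum_add_distrib]
  refine Finset.sum_congr rfl fun A hA => ?_
  have hA' : A ⊆ U.erase z := Finset.mem_powerset.mp hA
  have hzA : z ∉ A := fun h => hzn (hA' h)
  have w1 : wOn p (insert z (U.erase z)) (insert z A) = p z * wOn p (U.erase z) A := by
    unfold wOn
    rw [Finset.prod_insert hzA]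
    have : insert z (U.erase z) \ insert z A = U.erase z \ A := by
      ext w
      simp only [Finset.mem_sdiff, Finset.mem_insert, Finset.mem_erase, not_or]
      constructor
      · rintro ⟨h1, h2, h3⟩
        rcases h1 with rfl | h1
        · exact absurd rfl h2
        · exact ⟨h1, h3⟩
      · rintro ⟨⟨hne, hw⟩, h3⟩
        exact ⟨Or.inr ⟨hne, hw⟩, hne, h3⟩
    rw [this]; ring
  have w2 : wOn p (insert z (U.erase z)) A = (1 - p z) * wOn p (U.erase z) A := by
    unfold wOn
    have h1 : insert z (U.erase z) \ A = insert z (U.erase z \ A) := by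
      ext w
      simp only [Finset.mem_sdiff, Finset.mem_insert, Finset.mem_erase]
      constructor
      · rintro ⟨rfl | ⟨hne, hw⟩, h3⟩
        · exact Or.inl rfl
        · exact Or.inr ⟨⟨hne, hw⟩, h3⟩
      · rintro (rfl | ⟨⟨hne, hw⟩, h3⟩)
        · exact ⟨Or.inl rfl, hzA⟩
        · exact ⟨Or.inr ⟨hne, hw⟩, h3⟩
    have h2 : z ∉ U.erase z \ A := fun h => hzn (Finset.mem_sdiff.mp h).1
    rw [h1, Finset.prod_insert h2]; ring
  rw [w1, w2]; ring

/-- Jensen: `(E F)^2 ≤ E (F^2)`. -/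
theorem EE_sq_le (h0 : ∀ z, 0 ≤ p z) (h1 : ∀ z, p z ≤ 1) (F : Finset ι → ℝ) :
    (EE p U F) ^ 2 ≤ EE p U (fun A => F A ^ 2) := by
  have key := Finset.sum_mul_sq_le_sq_mul_sq U.powerset
    (fun A => Real.sqrt (wOn p U A)) (fun A => Real.sqrt (wOn p U A) * F A)
  have e1 : ∀ A : Finset ι, Real.sqrt (wOn p U A) * (Real.sqrt (wOn p U A) * F A)
      = wOn p U A * F A := fun A => by
    rw [← mul_assoc, Real.mul_self_sqrt (wOn_nonneg h0 h1 A)]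
  have e2 : ∀ A : Finset ι, Real.sqrt (wOn p U A) ^ 2 = wOn p U A := fun A =>
    Real.sq_sqrt (wOn_nonneg h0 h1 A)
  simp only [e1, e2, mul_pow] at key
  calc (EE p U F)^2 = (∑ A ∈ U.powerset, wOn p U A * F A)^2 := rfl
    _ ≤ (∑ A ∈ U.powerset, wOn p U A) * ∑ A ∈ U.powerset, wOn p U A * F A ^ 2 := key
    _ = EE p U (fun A => F A ^ 2) := by
        have : (∑ A ∈ U.powerset, wOn p U A) = 1 := by
          simpa [EE] using EE_one (p := p) (U := U) h0
        rw [this, one_mul]; rfl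

/-- Cauchy–Schwarz for `EE`. -/
theorem EE_CS (h0 : ∀ z, 0 ≤ p z) (h1 : ∀ z, p z ≤ 1) (F G : Finset ι → ℝ) :
    (EE p U (fun A => F A * G A)) ^ 2
      ≤ EE p U (fun A => F A ^ 2) * EE p U (fun A => G A ^ 2) := by
  have key := Finset.sum_mul_sq_le_sq_mul_sq U.powerset
    (fun A => Real.sqrt (wOn p U A) * F A) (fun A => Real.sqrt (wOn p U A) * G A)
  have e1 : ∀ A : Finset ι, (Real.sqrt (wOn p U A) * F A) * (Real.sqrt (wOn p U A) * G A)
      = wOn p U A * (F A * G A) := fun A => by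
    rw [mul_mul_mul_comm, Real.mul_self_sqrt (wOn_nonneg h0 h1 A)]
  have e2 : ∀ A : Finset ι, ∀ H : Finset ι → ℝ, (Real.sqrt (wOn p U A) * H A) ^ 2
      = wOn p U A * H A ^ 2 := fun A H => by
    rw [mul_pow, Real.sq_sqrt (wOn_nonneg h0 h1 A)]
  simp only [e1] at key
  calc (EE p U (fun A => F A * G A))^2
      = (∑ A ∈ U.powerset, wOn p U A * (F A * G A))^2 := rfl
    _ ≤ (∑ A ∈ U.powerset, (Real.sqrt (wOn p U A) * F A)^2)
        * ∑ A ∈ U.powerset, (Real.sqrt (wOn p U A) * G A)^2 := key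
    _ = EE p U (fun A => F A ^ 2) * EE p U (fun A => G A ^ 2) := by
        simp only [e2]; rfl

/-- single-site fluctuation variable. -/
def XX (p : ι → ℝ) (z : ι) (A : Finset ι) : ℝ := (if z ∈ A then 1 else 0) - p z

theorem EE_XX (h0 : ∀ z, (0:ℝ) ≤ p z) {z w : ι} (hz : z ∈ U) (hw : w ∈ U) :
    EE p U (fun A => XX p z A * XX p w A) = if z = w then p z * (1 - p z) else 0 := by
  rw [EE_erase hz]
  by_cases hzw : z = w
  · subst hzw
    rw [if_pos rfl]
    have hcong : ∀ A ∈ (U.erase z).powerset,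
        p z * (XX p z (insert z A) * XX p z (insert z A)) + (1 - p z) * (XX p z A * XX p z A)
          = p z * (1 - p z) := by
      intro A hA
      have hzA : z ∉ A := fun h => (Finset.notMem_erase z U) (Finset.mem_powerset.mp hA h)
      simp only [XX, Finset.mem_insert_self, if_pos, if_neg hzA]
      ring
    rw [EE_congr hcong, EE_const h0]
  · rw [if_neg hzw]
    have hcong : ∀ A ∈ (U.erase z).powerset,
        p z * (XX p z (insert z A) * XX p w (insert z A)) + (1 - p z) * (XX p z A * XX p w A)
          = 0 := by
      intro A hA
      have hzA : z ∉ A := fun h => (Finset.notMem_erase z U) (Finset.mem_powerset.mp hA h)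
      have hwz : w ∈ insert z A ↔ w ∈ A := by
        simp only [Finset.mem_insert]
        exact or_iff_right (fun h => hzw h.symm)
      simp only [XX, Finset.mem_insert_self, if_pos, if_neg hzA]
      by_cases hwA : w ∈ A
      · rw [if_pos (hwz.mpr hwA), if_pos hwA]; ring
      · rw [if_neg (fun h => hwA (hwz.mp h)), if_neg hwA]; ring
    rw [EE_congr hcong, EE_const h0]

theorem EE_fluct (h0 : ∀ z, (0:ℝ) ≤ p z) {T : Finset ι} (hT : T ⊆ U) (c : ι → ℝ) :
    EE p U (fun A => (∑ z ∈ T, c z * XX p z A) ^ 2)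
      = ∑ z ∈ T, c z ^ 2 * (p z * (1 - p z)) := by
  have expand : ∀ A ∈ U.powerset, (∑ z ∈ T, c z * XX p z A) ^ 2
      = ∑ z ∈ T, ∑ w ∈ T, c z * c w * (XX p z A * XX p w A) := by
    intro A _
    rw [sq, Finset.sum_mul_sum]
    refine Finset.sum_congr rfl fun z _ => Finset.sum_congr rfl fun w _ => by ring
  rw [EE_congr expand, EE_sum]
  refine Finset.sum_congr rfl fun z hz => ?_
  rw [EE_sum]
  have step : ∀ w ∈ T, EE p U (fun A => c z * c w * (XX p z A * XX p w A))
      = if z = w then c z ^ 2 * (p z * (1 - p z)) else 0 := by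
    intro w hw
    rw [EE_const_mul, EE_XX h0 (hT hz) (hT hw)]
    split_ifs with h
    · subst h; ring
    · rw [mul_zero]
  rw [Finset.sum_congr rfl step, Finset.sum_ite_eq T z fun _ => c z ^ 2 * (p z * (1 - p z)),
    if_pos hz]

theorem exchV_of_not_mem_not_mem {x y : ι} {T : Finset ι} (hx : x ∉ T) (hy : y ∉ T) :
    exchV x y T = T := by
  ext a
  rw [mem_exchV]
  rcases eq_or_ne a x with rfl | hax
  · rw [Equiv.swap_apply_left]; simp [hx, hy]
  · rcases eq_or_ne a y with rfl | hay
    · rw [Equiv.swap_apply_right]; simp [hx, hy]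
    · rw [Equiv.swap_apply_of_ne_of_ne hax hay]

theorem exchV_of_mem_mem {x y : ι} {T : Finset ι} (hx : x ∈ T) (hy : y ∈ T) :
    exchV x y T = T := by
  ext a
  rw [mem_exchV]
  rcases eq_or_ne a x with rfl | hax
  · rw [Equiv.swap_apply_left]; simp [hx, hy]
  · rcases eq_or_ne a y with rfl | hay
    · rw [Equiv.swap_apply_right]; simp [hx, hy]
    · rw [Equiv.swap_apply_of_ne_of_ne hax hay]

theorem exchV_of_mem_not_mem {x y : ι} {T : Finset ι} (hx : x ∈ T) (hy : y ∉ T) :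
    exchV x y T = insert y (T.erase x) := by
  have hxy : x ≠ y := fun h => hy (h ▸ hx)
  ext a
  rw [mem_exchV, Finset.mem_insert, Finset.mem_erase]
  rcases eq_or_ne a x with rfl | hax
  · rw [Equiv.swap_apply_left]
    simp [hy, hxy]
  · rcases eq_or_ne a y with rfl | hay
    · rw [Equiv.swap_apply_right]
      simp [hx]
    · rw [Equiv.swap_apply_of_ne_of_ne hax hay]
      simp [hax, hay]

theorem exchV_comm {x y : ι} {T : Finset ι} : exchV x y T = exchV y x T := by
  unfold exchV
  rw [Equiv.swap_comm]

theorem arith_combine (δ n V SG T1 T2 T3 D : ℝ) (hδ0 : 0 < δ) (hδ : δ ≤ 1 / 2)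
    (hn : 1 ≤ n) (hVnn : 0 ≤ V) (hSGnn : 0 ≤ SG)
    (hb1 : δ ^ 2 * T1 ^ 2 ≤ n * V) (hb2 : δ ^ 2 * T2 ^ 2 ≤ n * V)
    (hb3 : δ * T3 ^ 2 ≤ n * SG) (hsum : n * D = T1 + T2 + T3) :
    δ ^ 2 * (n * D) ^ 2 ≤ 6 * n * (V + SG) := by
  rw [hsum]
  have hn0 : (0:ℝ) < n := lt_of_lt_of_le one_pos hn
  have h3sq : (T1 + T2 + T3) ^ 2 ≤ 3 * (T1 ^ 2 + T2 ^ 2 + T3 ^ 2) := by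
    nlinarith [sq_nonneg (T1 - T2), sq_nonneg (T1 - T3), sq_nonneg (T2 - T3)]
  have k1 : δ ^ 2 * (T1 + T2 + T3) ^ 2
      ≤ 3 * (δ ^ 2 * T1 ^ 2) + 3 * (δ ^ 2 * T2 ^ 2) + 3 * (δ ^ 2 * T3 ^ 2) := by
    nlinarith [mul_le_mul_of_nonneg_left h3sq (sq_nonneg δ)]
  have k3 : δ ^ 2 * T3 ^ 2 ≤ n * SG := by
    have j1 := mul_le_mul_of_nonneg_left hb3 hδ0.le
    have j2 : δ * (n * SG) ≤ n * SG := by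
      nlinarith [mul_nonneg hn0.le hSGnn]
    nlinarith [j1, j2]
  have hnV : 0 ≤ n * V := mul_nonneg hn0.le hVnn
  have hnSG : 0 ≤ n * SG := mul_nonneg hn0.le hSGnn
  nlinarith [k1, hb1, hb2, k3, hnV, hnSG]

end Stmt7Aux

set_option maxHeartbeats 1000000 in
open Stmt7Aux Finset in
theorem stmt_7 (δ : ℝ) (hδ0 : 0 < δ) (hδ : δ ≤ 1 / 2) :
    ∃ C : ℝ, ∀ (ι : Type) [Fintype ι] [DecidableEq ι], ∀ p : ι → ℝ,
      (∀ z : ι, δ ≤ p z ∧ p z ≤ 1 - δ) →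
      ∀ Λ₁ Λ₂ : Finset ι, Disjoint Λ₁ Λ₂ →
      ∀ x : ι, x ∉ Λ₁ ∪ Λ₂ → ∀ y ∈ Λ₂,
      ∀ f : Finset ι → ℝ,
        (∀ S S' : Finset ι,
          S ∩ (Λ₁ ∪ Λ₂ ∪ {x}) = S' ∩ (Λ₁ ∪ Λ₂ ∪ {x}) → f S = f S') →
      ∀ S : Finset ι,
        condE p Λ₁ (fun S' => (gradV x y (condE p (insert x Λ₁) f) S') ^ 2) S
          ≤ C * ((Λ₂.card : ℝ)⁻¹ *
                condE p Λ₁ (fun S' => (f S' - condE p Λ₁ f S') ^ 2) S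
              + (Λ₂.card : ℝ)⁻¹ * ∑ z ∈ Λ₂,
                condE p Λ₁ (fun S' => (gradV x z f S') ^ 2) S) := by
  classical
  refine ⟨6 / δ ^ 2, ?_⟩
  intro ι _ _ p hp Λ₁ Λ₂ hdisj x hx y hy f hf S
  -- basic facts about p
  have hp0 : ∀ z, (0:ℝ) ≤ p z := fun z => le_trans hδ0.le (hp z).1
  have hp1 : ∀ z, p z ≤ 1 := fun z => by linarith [(hp z).2]
  have hpδ : ∀ z, δ ≤ p z := fun z => (hp z).1
  have hpδ' : ∀ z, δ ≤ 1 - p z := fun z => by linarith [(hp z).2]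
  -- membership facts
  have hxΛ₁ : x ∉ Λ₁ := fun h => hx (Finset.mem_union_left _ h)
  have hxΛ₂ : x ∉ Λ₂ := fun h => hx (Finset.mem_union_right _ h)
  have hyΛ₁ : y ∉ Λ₁ := fun h => (Finset.disjoint_left.mp hdisj h) hy
  have hyx : y ≠ x := fun h => hxΛ₂ (h ▸ hy)
  set base : Finset ι := S ∩ Λ₁ with hbasedef
  have hbaseΛ₁ : base ⊆ Λ₁ := Finset.inter_subset_right
  have hxbase : x ∉ base := fun h => hxΛ₁ (hbaseΛ₁ h)
  have hybase : y ∉ base := fun h => hyΛ₁ (hbaseΛ₁ h)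
  set Wx : Finset ι := Finset.univ \ Λ₁ with hWxdef
  set W : Finset ι := Finset.univ \ insert x Λ₁ with hWdef
  have hxWx : x ∈ Wx := by simp [hWxdef, hxΛ₁]
  have hWerase : Wx.erase x = W := by
    ext a
    simp only [hWxdef, hWdef, Finset.mem_erase, Finset.mem_sdiff, Finset.mem_univ,
      Finset.mem_insert, true_and, not_or]
  have hmemWx : ∀ {A : Finset ι}, A ∈ Wx.powerset → ∀ ⦃a⦄, a ∈ A → a ∉ Λ₁ := by
    intro A hA a ha
    have := Finset.mem_powerset.mp hA ha
    simpa only [hWxdef, Finset.mem_sdiff, Finset.mem_univ, true_and] using this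
  -- the key objects
  obtain ⟨h1, hh1def⟩ : ∃ F : Finset ι → ℝ, F = fun A => f (insert x (base ∪ A)) := ⟨_, rfl⟩
  obtain ⟨h0, hh0def⟩ : ∃ F : Finset ι → ℝ, F = fun A => f (base ∪ A) := ⟨_, rfl⟩
  obtain ⟨m, hmdef⟩ : ∃ t : ℝ, t = condE p Λ₁ f S := ⟨_, rfl⟩
  obtain ⟨G1, hG1def⟩ : ∃ t : ℝ, t = EE p W h1 := ⟨_, rfl⟩
  obtain ⟨G0, hG0def⟩ : ∃ t : ℝ, t = EE p W h0 := ⟨_, rfl⟩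
  obtain ⟨V, hVdef⟩ : ∃ t : ℝ,
      t = condE p Λ₁ (fun S' => (f S' - condE p Λ₁ f S') ^ 2) S := ⟨_, rfl⟩
  obtain ⟨n, hndef⟩ : ∃ t : ℝ, t = (Λ₂.card : ℝ) := ⟨_, rfl⟩
  have hn1 : (1:ℝ) ≤ n := by
    rw [hndef]
    exact_mod_cast Finset.card_pos.mpr ⟨y, hy⟩
  have hn0 : (0:ℝ) < n := lt_of_lt_of_le one_pos hn1
  -- rewriting condE as EE
  have hcond : ∀ F : Finset ι → ℝ, condE p Λ₁ F S = EE p Wx (fun A => F (base ∪ A)) :=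
    fun F => rfl
  -- Step A : the left side is at most (G1 - G0)^2
  have hLHS : condE p Λ₁ (fun S' => (gradV x y (condE p (insert x Λ₁) f) S') ^ 2) S
      ≤ (G1 - G0) ^ 2 := by
    have hgT0 : ∀ T : Finset ι, T ∩ insert x Λ₁ = base →
        condE p (insert x Λ₁) f T = G0 := by
      intro T hT
      have e : condE p (insert x Λ₁) f T
          = EE p W (fun A => f ((T ∩ insert x Λ₁) ∪ A)) := rfl
      rw [e, hT, hG0def, hh0def]
    have hgT1 : ∀ T : Finset ι, T ∩ insert x Λ₁ = insert x base →
        condE p (insert x Λ₁) f T = G1 := by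
      intro T hT
      have e : condE p (insert x Λ₁) f T
          = EE p W (fun A => f ((T ∩ insert x Λ₁) ∪ A)) := rfl
      rw [e, hT, hG1def]
      refine EE_congr fun A _ => ?_
      simp only [hh1def]
      rw [Finset.insert_union]
    rw [hcond]
    have hpt : ∀ A ∈ Wx.powerset,
        (gradV x y (condE p (insert x Λ₁) f) (base ∪ A)) ^ 2 ≤ (G1 - G0) ^ 2 := by
      intro A hA
      have hAΛ₁ : ∀ ⦃a⦄, a ∈ A → a ∉ Λ₁ := hmemWx hA
      have i1 : (base ∪ A) ∩ insert x Λ₁ = (if x ∈ A then insert x base else base) := by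
        ext a
        by_cases hax : a = x
        · simp only [hax]
          by_cases hxA : x ∈ A <;> simp [hxA, hxbase]
        · have h2 : a ∈ A → a ∉ Λ₁ := fun h => hAΛ₁ h
          have h3 : a ∈ base → a ∈ Λ₁ := fun h => hbaseΛ₁ h
          by_cases hxA : x ∈ A
          · rw [if_pos hxA]
            simp only [Finset.mem_inter, Finset.mem_union, Finset.mem_insert, hax, false_or]
            tauto
          · rw [if_neg hxA]
            simp only [Finset.mem_inter, Finset.mem_union, Finset.mem_insert, hax, false_or]
            tauto
      have i2 : exchV x y (base ∪ A) ∩ insert x Λ₁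
          = (if y ∈ A then insert x base else base) := by
        ext a
        rw [Finset.mem_inter, mem_exchV]
        by_cases hax : a = x
        · simp only [hax]
          rw [Equiv.swap_apply_left]
          by_cases hyA : y ∈ A <;> simp [hyA, hybase, hxbase]
        · by_cases hay : a = y
          · simp only [hay]
            rw [Equiv.swap_apply_right]
            by_cases hyA : y ∈ A <;> simp [hyA, hyx, hyΛ₁, hybase]
          · rw [Equiv.swap_apply_of_ne_of_ne hax hay]
            have h2 : a ∈ A → a ∉ Λ₁ := fun h => hAΛ₁ h
            have h3 : a ∈ base → a ∈ Λ₁ := fun h => hbaseΛ₁ h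
            by_cases hyA : y ∈ A
            · rw [if_pos hyA]
              simp only [Finset.mem_union, Finset.mem_insert, hax, false_or]
              tauto
            · rw [if_neg hyA]
              simp only [Finset.mem_union, Finset.mem_insert, hax, false_or]
              tauto
      have e1 : condE p (insert x Λ₁) f (base ∪ A) = (if x ∈ A then G1 else G0) := by
        by_cases hxA : x ∈ A
        · rw [if_pos hxA]; exact hgT1 _ (by rw [i1, if_pos hxA])
        · rw [if_neg hxA]; exact hgT0 _ (by rw [i1, if_neg hxA])
      have e2 : condE p (insert x Λ₁) f (exchV x y (base ∪ A))
          = (if y ∈ A then G1 else G0) := by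
        by_cases hyA : y ∈ A
        · rw [if_pos hyA]; exact hgT1 _ (by rw [i2, if_pos hyA])
        · rw [if_neg hyA]; exact hgT0 _ (by rw [i2, if_neg hyA])
      have egrad : gradV x y (condE p (insert x Λ₁) f) (base ∪ A)
          = (if y ∈ A then G1 else G0) - (if x ∈ A then G1 else G0) := by
        rw [← e1, ← e2]; rfl
      rw [egrad]
      split_ifs <;> nlinarith [sq_nonneg (G1 - G0), sq_nonneg (G1 + G0)]
    calc EE p Wx (fun A => (gradV x y (condE p (insert x Λ₁) f) (base ∪ A)) ^ 2)
        ≤ EE p Wx (fun _ => (G1 - G0) ^ 2) := EE_le hp0 hp1 hpt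
      _ = (G1 - G0) ^ 2 := EE_const hp0 _
  -- Step B : variance control
  have hVrw : V = EE p W (fun A => p x * (h1 A - m) ^ 2 + (1 - p x) * (h0 A - m) ^ 2) := by
    rw [hVdef, hcond]
    have hm : ∀ A ∈ Wx.powerset, condE p Λ₁ f (base ∪ A) = m := by
      intro A hA
      have e : condE p Λ₁ f (base ∪ A)
          = EE p Wx (fun A' => f (((base ∪ A) ∩ Λ₁) ∪ A')) := rfl
      have hsame : (base ∪ A) ∩ Λ₁ = base := by
        ext a
        simp only [Finset.mem_inter, Finset.mem_union]
        constructor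
        · rintro ⟨ha | ha, hΛ⟩
          · exact ha
          · exact absurd hΛ (hmemWx hA ha)
        · intro h
          exact ⟨Or.inl h, hbaseΛ₁ h⟩
      rw [e, hsame, hmdef, hcond]
    have e1 : EE p Wx (fun A => (f (base ∪ A) - condE p Λ₁ f (base ∪ A)) ^ 2)
        = EE p Wx (fun A => (f (base ∪ A) - m) ^ 2) :=
      EE_congr fun A hA => by rw [hm A hA]
    rw [e1, EE_erase hxWx, hWerase]
    refine EE_congr fun A hA => ?_
    simp only [hh1def, hh0def, Finset.union_insert]
  have hEnn0 : 0 ≤ EE p W (fun A => (h0 A - m) ^ 2) :=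
    EE_nonneg hp0 hp1 fun A _ => sq_nonneg _
  have hEnn1 : 0 ≤ EE p W (fun A => (h1 A - m) ^ 2) :=
    EE_nonneg hp0 hp1 fun A _ => sq_nonneg _
  have hV0 : δ * EE p W (fun A => (h0 A - m) ^ 2) ≤ V := by
    rw [hVrw, ← EE_const_mul]
    refine EE_le hp0 hp1 fun A _ => ?_
    nlinarith [sq_nonneg (h1 A - m), sq_nonneg (h0 A - m), hpδ x, hpδ' x,
      mul_nonneg (hp0 x) (sq_nonneg (h1 A - m))]
  have hV1 : δ * EE p W (fun A => (h1 A - m) ^ 2) ≤ V := by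
    rw [hVrw, ← EE_const_mul]
    refine EE_le hp0 hp1 fun A _ => ?_
    nlinarith [sq_nonneg (h1 A - m), sq_nonneg (h0 A - m), hpδ x, hpδ' x,
      mul_nonneg (by linarith [hp1 x] : (0:ℝ) ≤ 1 - p x) (sq_nonneg (h0 A - m))]
  have hVnn : 0 ≤ V := by
    rw [hVdef, hcond]
    exact EE_nonneg hp0 hp1 fun A _ => sq_nonneg _
  -- z-facts
  have hzW : ∀ z ∈ Λ₂, z ∈ W := by
    intro z hz
    have hzΛ₁ : z ∉ Λ₁ := fun h => (Finset.disjoint_left.mp hdisj h) hz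
    have hzx : z ≠ x := fun h => hxΛ₂ (h ▸ hz)
    simp [hWdef, hzx, hzΛ₁]
  -- Step C : gradient control
  have hxW : x ∉ W := by simp [hWdef]
  have hG : ∀ z ∈ Λ₂, δ * EE p (W.erase z) (fun A => (h1 A - h0 (insert z A)) ^ 2)
      ≤ condE p Λ₁ (fun S' => (gradV x z f S') ^ 2) S := by
    intro z hz
    have hzW' : z ∈ W := hzW z hz
    have hzΛ₁ : z ∉ Λ₁ := fun h => (Finset.disjoint_left.mp hdisj h) hz
    have hzx : z ≠ x := fun h => hxΛ₂ (h ▸ hz)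
    have hxz : x ≠ z := Ne.symm hzx
    have hzbase : z ∉ base := fun h => hzΛ₁ (hbaseΛ₁ h)
    have hGrw : condE p Λ₁ (fun S' => (gradV x z f S') ^ 2) S
        = EE p (W.erase z) (fun A => (p x * (1 - p z) + (1 - p x) * p z)
            * (h1 A - h0 (insert z A)) ^ 2) := by
      rw [hcond, EE_erase hxWx, hWerase, EE_erase hzW']
      refine EE_congr fun A hA => ?_
      have hAW : A ⊆ W.erase z := Finset.mem_powerset.mp hA
      have hzA : z ∉ A := fun h => (Finset.notMem_erase z W) (hAW h)
      have hxA : x ∉ A := fun h => hxW (Finset.mem_of_mem_erase (hAW h))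
      have hxT : x ∉ base ∪ A := by simp [Finset.mem_union, hxbase, hxA]
      have hzT : z ∉ base ∪ A := by simp [Finset.mem_union, hzbase, hzA]
      have g1 : exchV x z (base ∪ insert x (insert z A)) = base ∪ insert x (insert z A) :=
        exchV_of_mem_mem (by simp) (by simp)
      have g4 : exchV x z (base ∪ A) = base ∪ A := exchV_of_not_mem_not_mem hxT hzT
      have g2 : exchV x z (base ∪ insert z A) = insert x (base ∪ A) := by
        rw [exchV_comm, Finset.union_insert,
          exchV_of_mem_not_mem (Finset.mem_insert_self z _)
            (by simp [Finset.mem_insert, hxz, hxT]),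
          Finset.erase_insert hzT]
      have g3 : exchV x z (base ∪ insert x A) = base ∪ insert z A := by
        rw [Finset.union_insert,
          exchV_of_mem_not_mem (Finset.mem_insert_self x _)
            (by simp [Finset.mem_insert, hzx, hzT]),
          Finset.erase_insert hxT, ← Finset.union_insert]
      simp only [gradV]
      rw [g1, g2, g3, g4]
      simp only [hh1def, hh0def, Finset.union_insert]
      ring
    rw [hGrw, ← EE_const_mul]
    refine EE_le hp0 hp1 fun A _ => ?_
    have hc : δ ≤ p x * (1 - p z) + (1 - p x) * p z := by
      nlinarith [hpδ x, hpδ' x, hp0 z, hp1 z,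
        mul_nonneg (by linarith [hpδ x] : (0:ℝ) ≤ p x - δ) (by linarith [hp1 z] : (0:ℝ) ≤ 1 - p z),
        mul_nonneg (by linarith [hpδ' x] : (0:ℝ) ≤ 1 - p x - δ) (hp0 z)]
    nlinarith [sq_nonneg (h1 A - h0 (insert z A)), hc,
      mul_le_mul_of_nonneg_right hc (sq_nonneg (h1 A - h0 (insert z A)))]
  have hGnn : ∀ z ∈ Λ₂, 0 ≤ condE p Λ₁ (fun S' => (gradV x z f S') ^ 2) S := by
    intro z hz
    rw [hcond]
    exact EE_nonneg hp0 hp1 fun A _ => sq_nonneg _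
  -- Step D : the decomposition identity
  have hid : ∀ z ∈ Λ₂, G1 - G0
      = EE p W (fun A => XX p z A * ((h0 A - m) / p z + (h1 A - m) / (1 - p z)))
        + EE p (W.erase z) (fun A => h1 A - h0 (insert z A)) := by
    intro z hz
    have hzW' : z ∈ W := hzW z hz
    have hpz0 : p z ≠ 0 := ne_of_gt (lt_of_lt_of_le hδ0 (hpδ z))
    have hpz1 : (1:ℝ) - p z ≠ 0 := ne_of_gt (lt_of_lt_of_le hδ0 (hpδ' z))
    rw [hG1def, hG0def, EE_erase hzW' h1, EE_erase hzW' h0,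
      EE_erase hzW' (fun A => XX p z A * ((h0 A - m) / p z + (h1 A - m) / (1 - p z))),
      ← EE_sub, ← EE_add]
    refine EE_congr fun A hA => ?_
    have hzA : z ∉ A := fun h => (Finset.notMem_erase z W) ((Finset.mem_powerset.mp hA) h)
    have e1 : XX p z (insert z A) = 1 - p z := by simp [XX]
    have e2 : XX p z A = -p z := by simp [XX, hzA]
    simp only [e1, e2]
    field_simp
    ring
  -- Step E : averaging
  obtain ⟨Y0, hY0def⟩ : ∃ F : Finset ι → ℝ,
      F = fun A => ∑ z ∈ Λ₂, (p z)⁻¹ * XX p z A := ⟨_, rfl⟩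
  obtain ⟨Y1, hY1def⟩ : ∃ F : Finset ι → ℝ,
      F = fun A => ∑ z ∈ Λ₂, (1 - p z)⁻¹ * XX p z A := ⟨_, rfl⟩
  obtain ⟨T1, hT1def⟩ : ∃ t : ℝ, t = EE p W (fun A => Y0 A * (h0 A - m)) := ⟨_, rfl⟩
  obtain ⟨T2, hT2def⟩ : ∃ t : ℝ, t = EE p W (fun A => Y1 A * (h1 A - m)) := ⟨_, rfl⟩
  obtain ⟨T3, hT3def⟩ : ∃ t : ℝ,
      t = ∑ z ∈ Λ₂, EE p (W.erase z) (fun A => h1 A - h0 (insert z A)) := ⟨_, rfl⟩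
  obtain ⟨SG, hSGdef⟩ : ∃ t : ℝ,
      t = ∑ z ∈ Λ₂, condE p Λ₁ (fun S' => (gradV x z f S') ^ 2) S := ⟨_, rfl⟩
  have hSGnn : 0 ≤ SG := by
    rw [hSGdef]
    exact Finset.sum_nonneg hGnn
  have hΛ₂W : Λ₂ ⊆ W := fun z hz => hzW z hz
  -- the sum identity
  have hsum : n * (G1 - G0) = T1 + T2 + T3 := by
    have hone : ∑ _z ∈ Λ₂, (G1 - G0) = n * (G1 - G0) := by
      rw [Finset.sum_const, hndef, nsmul_eq_mul]
    have hsplit : ∑ z ∈ Λ₂,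
        EE p W (fun A => XX p z A * ((h0 A - m) / p z + (h1 A - m) / (1 - p z)))
        = T1 + T2 := by
      rw [← EE_sum, hT1def, hT2def, ← EE_add]
      refine EE_congr fun A _ => ?_
      simp only [hY0def, hY1def]
      rw [Finset.sum_mul, Finset.sum_mul, ← Finset.sum_add_distrib]
      refine Finset.sum_congr rfl fun z _ => ?_
      have hpz0 : p z ≠ 0 := ne_of_gt (lt_of_lt_of_le hδ0 (hpδ z))
      have hpz1 : (1:ℝ) - p z ≠ 0 := ne_of_gt (lt_of_lt_of_le hδ0 (hpδ' z))
      field_simp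
    rw [← hone, Finset.sum_congr rfl hid, Finset.sum_add_distrib, hsplit, hT3def]
  -- second moments of the fluctuation fields
  have hYnn0 : 0 ≤ EE p W (fun A => Y0 A ^ 2) := EE_nonneg hp0 hp1 fun A _ => sq_nonneg _
  have hYnn1 : 0 ≤ EE p W (fun A => Y1 A ^ 2) := EE_nonneg hp0 hp1 fun A _ => sq_nonneg _
  have hbY0 : δ * EE p W (fun A => Y0 A ^ 2) ≤ n := by
    have e : EE p W (fun A => Y0 A ^ 2) = ∑ z ∈ Λ₂, ((p z)⁻¹) ^ 2 * (p z * (1 - p z)) := by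
      simp only [hY0def]
      exact EE_fluct hp0 hΛ₂W _
    rw [e, Finset.mul_sum]
    calc ∑ z ∈ Λ₂, δ * (((p z)⁻¹) ^ 2 * (p z * (1 - p z))) ≤ ∑ _z ∈ Λ₂, (1:ℝ) := by
          refine Finset.sum_le_sum fun z _ => ?_
          have hz0 : 0 < p z := lt_of_lt_of_le hδ0 (hpδ z)
          have e2 : ((p z)⁻¹) ^ 2 * (p z * (1 - p z)) = (1 - p z) / p z := by
            field_simp
          rw [e2, ← mul_div_assoc, div_le_one hz0]
          nlinarith [hpδ z, hp1 z, mul_nonneg hδ0.le (hp0 z)]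
      _ = n := by rw [Finset.sum_const, hndef, nsmul_eq_mul, mul_one]
  have hbY1 : δ * EE p W (fun A => Y1 A ^ 2) ≤ n := by
    have e : EE p W (fun A => Y1 A ^ 2) = ∑ z ∈ Λ₂, ((1 - p z)⁻¹) ^ 2 * (p z * (1 - p z)) := by
      simp only [hY1def]
      exact EE_fluct hp0 hΛ₂W _
    rw [e, Finset.mul_sum]
    calc ∑ z ∈ Λ₂, δ * (((1 - p z)⁻¹) ^ 2 * (p z * (1 - p z))) ≤ ∑ _z ∈ Λ₂, (1:ℝ) := by
          refine Finset.sum_le_sum fun z _ => ?_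
          have hz1 : 0 < 1 - p z := lt_of_lt_of_le hδ0 (hpδ' z)
          have e2 : ((1 - p z)⁻¹) ^ 2 * (p z * (1 - p z)) = p z / (1 - p z) := by
            field_simp
          rw [e2, ← mul_div_assoc, div_le_one hz1]
          nlinarith [hpδ' z, hp1 z, hp0 z, mul_nonneg hδ0.le (by linarith [hp1 z] : (0:ℝ) ≤ 1 - p z)]
      _ = n := by rw [Finset.sum_const, hndef, nsmul_eq_mul, mul_one]
  -- Cauchy-Schwarz bounds
  have hb1 : δ ^ 2 * T1 ^ 2 ≤ n * V := by
    have cs := EE_CS (U := W) hp0 hp1 Y0 (fun A => h0 A - m)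
    rw [← hT1def] at cs
    have h2 := mul_le_mul hbY0 hV0 (mul_nonneg hδ0.le hEnn0) hn0.le
    nlinarith [cs, hYnn0, hEnn0, mul_le_mul_of_nonneg_left cs (sq_nonneg δ)]
  have hb2 : δ ^ 2 * T2 ^ 2 ≤ n * V := by
    have cs := EE_CS (U := W) hp0 hp1 Y1 (fun A => h1 A - m)
    rw [← hT2def] at cs
    have h2 := mul_le_mul hbY1 hV1 (mul_nonneg hδ0.le hEnn1) hn0.le
    nlinarith [cs, hYnn1, hEnn1, mul_le_mul_of_nonneg_left cs (sq_nonneg δ)]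
  have hb3 : δ * T3 ^ 2 ≤ n * SG := by
    have cs := Finset.sum_mul_sq_le_sq_mul_sq Λ₂ (fun _ => (1:ℝ))
      (fun z => EE p (W.erase z) (fun A => h1 A - h0 (insert z A)))
    simp only [one_mul, one_pow] at cs
    rw [← hT3def] at cs
    have hcard : ∑ _z ∈ Λ₂, (1:ℝ) = n := by
      rw [Finset.sum_const, hndef, nsmul_eq_mul, mul_one]
    rw [hcard] at cs
    have hsum3 : ∑ z ∈ Λ₂, δ * (EE p (W.erase z) (fun A => h1 A - h0 (insert z A))) ^ 2
        ≤ SG := by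
      rw [hSGdef]
      refine Finset.sum_le_sum fun z hz => ?_
      have j := EE_sq_le (U := W.erase z) hp0 hp1 (fun A => h1 A - h0 (insert z A))
      have hGz := hG z hz
      nlinarith [mul_le_mul_of_nonneg_left j hδ0.le]
    calc δ * T3 ^ 2 ≤ δ * (n * ∑ z ∈ Λ₂,
          (EE p (W.erase z) (fun A => h1 A - h0 (insert z A))) ^ 2) :=
          mul_le_mul_of_nonneg_left cs hδ0.le
      _ = n * ∑ z ∈ Λ₂, δ * (EE p (W.erase z) (fun A => h1 A - h0 (insert z A))) ^ 2 := by
          rw [Finset.mul_sum, Finset.mul_sum, Finset.mul_sum]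
          refine Finset.sum_congr rfl fun z _ => by ring
      _ ≤ n * SG := mul_le_mul_of_nonneg_left hsum3 hn0.le
  -- assemble
  have key : δ ^ 2 * (n * (G1 - G0)) ^ 2 ≤ 6 * n * (V + SG) :=
    arith_combine δ n V SG T1 T2 T3 (G1 - G0) hδ0 hδ hn1 hVnn hSGnn hb1 hb2 hb3 hsum
  have hfinal : (G1 - G0) ^ 2 ≤ 6 / δ ^ 2 * (n⁻¹ * V + n⁻¹ * SG) := by
    have heq : 6 / δ ^ 2 * (n⁻¹ * V + n⁻¹ * SG) = (6 * n * (V + SG)) / (δ ^ 2 * n ^ 2) := by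
      field_simp
    rw [heq, le_div_iff₀ (by positivity)]
    calc (G1 - G0) ^ 2 * (δ ^ 2 * n ^ 2) = δ ^ 2 * (n * (G1 - G0)) ^ 2 := by ring
      _ ≤ 6 * n * (V + SG) := key
  rw [hndef, hVdef, hSGdef] at hfinal
  exact hLHS.trans hfinal
end
end

section
/- Let (α_x)_{x∈ℤ^d} be a stationary random field taking values in [−B, B] for some B < ∞, and suppose for some γ ≥ max{4, 2(d+2)/d²} and C₀ < ∞ the mixing condition holds: for all l > 0 and all functions f of the field variables in a cube Λ_l of side l with 𝔼[f] = 0, 𝔼[|Av_{x∈Λ_K} τ_x f|^γ] ≤ C₀ (l/K)^{γd/2} 𝔼[|f|^γ], where τ_x is the shift of the field by x and Λ_K is the cube of side length K. For m ∈ (0,1) let λ(m) be the unique real number with 𝔼[ e^{α₀+λ(m)}/(1+e^{α₀+λ(m)}) ] = m, and let λ̂_K(m) be the empirical chemical potential on the cube Λ_K, i.e. the unique real number with Av_{x∈Λ_K} e^{λ̂_K(m)+α_x}/(1+e^{λ̂_K(m)+α_x}) = m. Then there is a constant C < ∞ independent of m ∈ (0,1) such that 𝔼[ |λ̂_K(m)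 − λ(m)|^γ ] ≤ C K^{-γd/2} for all K. -/
noncomputable section
open MeasureTheory

/-- The cube `Λ_l = {0, …, l-1}^d` in `ℤ^d`. -/
def cubeZ (d l : ℕ) : Finset (Fin d → ℤ) :=
  Fintype.piFinset fun _ : Fin d => Finset.Ico (0 : ℤ) (l : ℤ)

/-- The σ-algebra `F_{Λ_l}` generated by the field variables `α_x = α₀ ∘ T_x`, `x ∈ Λ_l`. -/
def fieldSigma {Ω : Type*} (d l : ℕ) (T : (Fin d → ℤ) → Ω → Ω) (α0 : Ω → ℝ) :
    MeasurableSpace Ω :=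
  MeasurableSpace.comap
    (fun ω => fun x : {y : Fin d → ℤ // y ∈ cubeZ d l} => α0 (T x.1 ω)) MeasurableSpace.pi

/-!
Put `f = σ(α₀ + λ) - m`, where `σ t = eᵗ / (1 + eᵗ)`. It is centred and measurable with respect
to the field on the one-point cube `Λ₁`, so the mixing condition with `l = 1` gives
`𝔼|Av_{x ∈ Λ_K} τ_x f|^γ ≤ C₀ K^{-γd/2} 𝔼|f|^γ`.

Both `λ` and `λ̂_K` are squeezed by `σ(· - B) ≤ m ≤ σ(· + B)`, so `|λ̂_K - λ| ≤ 2B` and every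
argument of `σ` below lies in `[λ - 3B, λ + 3B]`. There `σ' = σ(t) σ(-t)` is at least
`c = σ(λ - 3B) σ(-λ - 3B)`, and `Av τ_x f = Av (σ(α_x + λ) - σ(α_x + λ̂_K))`, so
`c |λ̂_K - λ| ≤ |Av τ_x f|`. Conversely `|f| ≤ 2B · max σ' ≤ 2B e^{12B} c`, because
`σ(t + h) ≤ eʰ σ(t)` for `h ≥ 0`. Hence `c` cancels from
`𝔼|λ̂_K - λ|^γ ≤ c^{-γ} C₀ K^{-γd/2} (2B e^{12B} c)^γ`.
-/

open Real Set Finset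
open scoped BigOperators

section Sigmoid

lemma exp_div_one_add_exp_eq_sigmoid (t : ℝ) : exp t / (1 + exp t) = sigmoid t := by
  rw [sigmoid_def, exp_neg]
  field_simp
  ring

lemma sigmoid_le_exp_sub_mul_sigmoid {a b : ℝ} (hab : a ≤ b) :
    sigmoid b ≤ exp (b - a) * sigmoid a := by
  rw [sigmoid_def, sigmoid_def, ← div_eq_mul_inv, inv_eq_one_div,
    div_le_div_iff₀ (by positivity) (by positivity), one_mul, mul_add, mul_one, ← exp_add,
    show b - a + -b = -a by ring]
  linarith [one_le_exp (sub_nonneg.2 hab)]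

lemma deriv_sigmoid_mem_Icc {L U x : ℝ} (hx : x ∈ Icc L U) :
    deriv sigmoid x ∈ Icc (sigmoid L * sigmoid (-U)) (sigmoid U * sigmoid (-L)) := by
  simp only [deriv_sigmoid, ← sigmoid_neg]
  obtain ⟨hLx, hxU⟩ := hx
  constructor
  · exact mul_le_mul (sigmoid_le hLx) (sigmoid_le (by linarith)) (sigmoid_nonneg _)
      (sigmoid_nonneg _)
  · exact mul_le_mul (sigmoid_le hxU) (sigmoid_le (by linarith)) (sigmoid_nonneg _)
      (sigmoid_nonneg _)

variable {L U s t : ℝ}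

lemma mul_sub_le_sigmoid_sub (hs : s ∈ Icc L U) (ht : t ∈ Icc L U) (hst : s ≤ t) :
    sigmoid L * sigmoid (-U) * (t - s) ≤ sigmoid t - sigmoid s :=
  (convex_Icc L U).mul_sub_le_image_sub_of_le_deriv continuous_sigmoid.continuousOn
    differentiable_sigmoid.differentiableOn
    (fun _ hx => (deriv_sigmoid_mem_Icc (interior_subset hx)).1) s hs t ht hst

lemma sigmoid_sub_le_mul_sub (hs : s ∈ Icc L U) (ht : t ∈ Icc L U) (hst : s ≤ t) :
    sigmoid t - sigmoid s ≤ sigmoid U * sigmoid (-L) * (t - s) :=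
  (convex_Icc L U).image_sub_le_mul_sub_of_deriv_le continuous_sigmoid.continuousOn
    differentiable_sigmoid.differentiableOn
    (fun _ hx => (deriv_sigmoid_mem_Icc (interior_subset hx)).2) s hs t ht hst

lemma mul_sq_sub_le_sub_mul_sigmoid_sub (hs : s ∈ Icc L U) (ht : t ∈ Icc L U) :
    sigmoid L * sigmoid (-U) * (t - s) ^ 2 ≤ (t - s) * (sigmoid t - sigmoid s) := by
  rcases le_total s t with hst | hts
  · have := mul_le_mul_of_nonneg_left (mul_sub_le_sigmoid_sub hs ht hst) (sub_nonneg.2 hst)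
    linarith
  · have := mul_le_mul_of_nonneg_left (mul_sub_le_sigmoid_sub ht hs hts) (sub_nonneg.2 hts)
    linarith

lemma sigmoid_mul_sigmoid_neg_le (hLU : L ≤ U) :
    sigmoid U * sigmoid (-L) ≤ exp (2 * (U - L)) * (sigmoid L * sigmoid (-U)) := by
  calc sigmoid U * sigmoid (-L)
      ≤ (exp (U - L) * sigmoid L) * (exp (U - L) * sigmoid (-U)) :=
        mul_le_mul (sigmoid_le_exp_sub_mul_sigmoid hLU)
          (by simpa only [neg_sub_neg] using sigmoid_le_exp_sub_mul_sigmoid (neg_le_neg hLU))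
          (sigmoid_nonneg _) (mul_nonneg (exp_nonneg _) (sigmoid_nonneg _))
    _ = exp (2 * (U - L)) * (sigmoid L * sigmoid (-U)) := by
        rw [show 2 * (U - L) = (U - L) + (U - L) by ring, exp_add]; ring

variable {B lam μ m : ℝ}

lemma abs_sub_le_of_sigmoid_mem_Icc (hlam : m ∈ Icc (sigmoid (lam - B)) (sigmoid (lam + B)))
    (hμ : m ∈ Icc (sigmoid (μ - B)) (sigmoid (μ + B))) : |μ - lam| ≤ 2 * B := by
  have h₁ : lam - B ≤ μ + B := sigmoid_le_iff.1 (hlam.1.trans hμ.2)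
  have h₂ : μ - B ≤ lam + B := sigmoid_le_iff.1 (hμ.1.trans hlam.2)
  rw [abs_le]
  constructor <;> linarith

lemma abs_sigmoid_add_sub_le {a : ℝ} (ha : |a| ≤ B)
    (hm : m ∈ Icc (sigmoid (lam - B)) (sigmoid (lam + B))) :
    |sigmoid (a + lam) - m| ≤
      2 * B * exp (12 * B) * (sigmoid (lam - 3 * B) * sigmoid (-(lam + 3 * B))) := by
  have hB : 0 ≤ B := (abs_nonneg a).trans ha
  obtain ⟨ha₁, ha₂⟩ := abs_le.1 ha
  have hwidth := sigmoid_sub_le_mul_sub (L := lam - 3 * B) (U := lam + 3 * B)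
    (s := lam - B) (t := lam + B) ⟨by linarith, by linarith⟩ ⟨by linarith, by linarith⟩
    (by linarith)
  have hratio := sigmoid_mul_sigmoid_neg_le (L := lam - 3 * B) (U := lam + 3 * B) (by linarith)
  rw [show lam + B - (lam - B) = 2 * B by ring] at hwidth
  rw [show 2 * (lam + 3 * B - (lam - 3 * B)) = 12 * B by ring] at hratio
  have hσ₁ : sigmoid (lam - B) ≤ sigmoid (a + lam) := sigmoid_le (by linarith)
  have hσ₂ : sigmoid (a + lam) ≤ sigmoid (lam + B) := sigmoid_le (by linarith)
  calc |sigmoid (a + lam) - m| ≤ sigmoid (lam + B) - sigmoid (lam - B) := by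
        rw [abs_le]; constructor <;> linarith [hm.1, hm.2]
    _ ≤ sigmoid (lam + 3 * B) * sigmoid (-(lam - 3 * B)) * (2 * B) := hwidth
    _ ≤ exp (12 * B) * (sigmoid (lam - 3 * B) * sigmoid (-(lam + 3 * B))) * (2 * B) := by
        gcongr
    _ = _ := by ring

end Sigmoid

section Average

variable {ι : Type*} {S : Finset ι} {a : ι → ℝ} {B : ℝ}

lemma expect_sigmoid_add_mem_Icc (hS : S.Nonempty) (ha : ∀ x ∈ S, |a x| ≤ B) (μ : ℝ) :
    𝔼 x ∈ S, sigmoid (μ + a x) ∈ Icc (sigmoid (μ - B)) (sigmoid (μ + B)) :=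
  ⟨le_expect hS fun x hx => sigmoid_le (by linarith [(abs_le.1 (ha x hx)).1]),
    expect_le hS fun x hx => sigmoid_le (by linarith [(abs_le.1 (ha x hx)).2])⟩

lemma mul_abs_sub_le_abs_expect_sigmoid_sub (hS : S.Nonempty) (ha : ∀ x ∈ S, |a x| ≤ B)
    {lam μ m : ℝ} (hm : m ∈ Icc (sigmoid (lam - B)) (sigmoid (lam + B)))
    (hμ : 𝔼 x ∈ S, sigmoid (μ + a x) = m) :
    sigmoid (lam - 3 * B) * sigmoid (-(lam + 3 * B)) * |μ - lam| ≤
      |𝔼 x ∈ S, (sigmoid (a x + lam) - m)| := by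
  set c := sigmoid (lam - 3 * B) * sigmoid (-(lam + 3 * B))
  have hdist := abs_le.1 <|
    abs_sub_le_of_sigmoid_mem_Icc hm (hμ ▸ expect_sigmoid_add_mem_Icc hS ha μ)
  have hterm : ∀ x ∈ S, c * (lam - μ) ^ 2 ≤
      (lam - μ) * (sigmoid (a x + lam) - sigmoid (μ + a x)) := by
    intro x hx
    obtain ⟨hx₁, hx₂⟩ := abs_le.1 (ha x hx)
    have := mul_sq_sub_le_sub_mul_sigmoid_sub (L := lam - 3 * B) (U := lam + 3 * B)
      (s := μ + a x) (t := a x + lam) ⟨by linarith, by linarith⟩ ⟨by linarith, by linarith⟩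
    rwa [show a x + lam - (μ + a x) = lam - μ by ring] at this
  have hE : 𝔼 x ∈ S, (sigmoid (a x + lam) - m) =
      𝔼 x ∈ S, (sigmoid (a x + lam) - sigmoid (μ + a x)) := by
    rw [expect_sub_distrib, expect_sub_distrib, hμ, expect_const hS]
  have hsq : c * (lam - μ) ^ 2 ≤ (lam - μ) * 𝔼 x ∈ S, (sigmoid (a x + lam) - m) := by
    rw [hE, mul_expect]
    exact le_expect hS hterm
  rcases eq_or_ne μ lam with rfl | hne
  · simp
  have hpos : 0 < |lam - μ| := abs_pos.2 (sub_ne_zero.2 hne.symm)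
  rw [abs_sub_comm]
  refine le_of_mul_le_mul_right ?_ hpos
  calc c * |lam - μ| * |lam - μ| = c * (lam - μ) ^ 2 := by rw [mul_assoc, ← sq, sq_abs]
    _ ≤ |(lam - μ) * 𝔼 x ∈ S, (sigmoid (a x + lam) - m)| := hsq.trans (le_abs_self _)
    _ = _ := by rw [abs_mul, mul_comm]

end Average

section Moments

variable {Ω : Type*} [MeasurableSpace Ω] {P : Measure Ω}

lemma measurable_expect {ι : Type*} {S : Finset ι} {F : ι → Ω → ℝ}
    (hF : ∀ x ∈ S, Measurable (F x)) : Measurable fun ω => 𝔼 x ∈ S, F x ω := by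
  simp_rw [expect_eq_sum_div_card]
  exact (Finset.measurable_sum S hF).div_const _

lemma integrable_sigmoid_comp [IsFiniteMeasure P] {X : Ω → ℝ} (hX : Measurable X) :
    Integrable (fun ω => sigmoid (X ω)) P :=
  .of_bound (continuous_sigmoid.measurable.comp hX).aestronglyMeasurable 1
    (ae_of_all _ fun ω => by
      rw [Real.norm_eq_abs, abs_of_nonneg (sigmoid_nonneg _)]; exact sigmoid_le_one _)

lemma integral_sigmoid_add_mem_Icc [IsProbabilityMeasure P] {α : Ω → ℝ} (hα : Measurable α)
    {B : ℝ} (hαB : ∀ ω, |α ω| ≤ B) (lam : ℝ) :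
    ∫ ω, sigmoid (α ω + lam) ∂P ∈ Icc (sigmoid (lam - B)) (sigmoid (lam + B)) := by
  have hint := integrable_sigmoid_comp (P := P) (hα.add_const lam)
  constructor
  · calc sigmoid (lam - B) = ∫ _, sigmoid (lam - B) ∂P := by simp
      _ ≤ _ := integral_mono (integrable_const _) hint fun ω =>
          sigmoid_le (by linarith [(abs_le.1 (hαB ω)).1])
  · calc ∫ ω, sigmoid (α ω + lam) ∂P ≤ ∫ _, sigmoid (lam + B) ∂P :=
          integral_mono hint (integrable_const _) fun ω =>
            sigmoid_le (by linarith [(abs_le.1 (hαB ω)).2])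
      _ = sigmoid (lam + B) := by simp

lemma integral_rpow_abs_le_of_abs_le {X Y : Ω → ℝ} {a γ : ℝ} (ha : 0 ≤ a) (hγ : 0 ≤ γ)
    (hY : Integrable (fun ω => |Y ω| ^ γ) P) (hXY : ∀ ω, |X ω| ≤ a * |Y ω|) :
    ∫ ω, |X ω| ^ γ ∂P ≤ a ^ γ * ∫ ω, |Y ω| ^ γ ∂P := by
  rw [← integral_const_mul]
  refine integral_mono_of_nonneg (ae_of_all _ fun ω => by positivity) (hY.const_mul _)
    (ae_of_all _ fun ω => ?_)
  dsimp only
  rw [← mul_rpow ha (abs_nonneg _)]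
  exact rpow_le_rpow (abs_nonneg _) (hXY ω) hγ

lemma integrable_rpow_abs_of_abs_le [IsFiniteMeasure P] {X : Ω → ℝ} (hX : Measurable X)
    {b γ : ℝ} (hγ : 0 ≤ γ) (hXb : ∀ ω, |X ω| ≤ b) :
    Integrable (fun ω => |X ω| ^ γ) P :=
  .of_bound (hX.abs.pow_const γ).aestronglyMeasurable (b ^ γ) (ae_of_all _ fun ω => by
    rw [Real.norm_eq_abs, abs_of_nonneg (by positivity)]
    exact rpow_le_rpow (abs_nonneg _) (hXb ω) hγ)

lemma integral_rpow_abs_le_of_abs_le_const [IsProbabilityMeasure P] {X : Ω → ℝ} {b γ : ℝ}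
    (hγ : 0 ≤ γ) (hXb : ∀ ω, |X ω| ≤ b) : ∫ ω, |X ω| ^ γ ∂P ≤ b ^ γ := by
  have := nonempty_of_isProbabilityMeasure P
  have hb : 0 ≤ b := (abs_nonneg _).trans (hXb (Classical.arbitrary _))
  simpa using integral_rpow_abs_le_of_abs_le (P := P) (Y := fun _ => 1) hb hγ
    (integrable_const _) (by simpa using hXb)

lemma integral_rpow_abs_le_of_mul_abs_le [IsProbabilityMeasure P] {X Y Z : Ω → ℝ}
    {b c q C γ : ℝ} (hc : 0 < c) (hb : 0 ≤ b) (hq : 0 ≤ q) (hγ : 0 ≤ γ) (hY : Measurable Y)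
    (hYb : ∀ ω, |Y ω| ≤ b * c) (hZb : ∀ ω, |Z ω| ≤ b * c) (hXY : ∀ ω, c * |X ω| ≤ |Y ω|)
    (hYZ : ∫ ω, |Y ω| ^ γ ∂P ≤ C * q * ∫ ω, |Z ω| ^ γ ∂P) :
    ∫ ω, |X ω| ^ γ ∂P ≤ max C 0 * b ^ γ * q := by
  have hcc : c⁻¹ ^ γ * c ^ γ = 1 := by
    rw [← mul_rpow (inv_nonneg.2 hc.le) hc.le, inv_mul_cancel₀ hc.ne', one_rpow]
  calc ∫ ω, |X ω| ^ γ ∂P ≤ c⁻¹ ^ γ * ∫ ω, |Y ω| ^ γ ∂P :=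
        integral_rpow_abs_le_of_abs_le (inv_nonneg.2 hc.le) hγ
          (integrable_rpow_abs_of_abs_le hY hγ hYb) fun ω => (le_inv_mul_iff₀ hc).2 (hXY ω)
    _ ≤ c⁻¹ ^ γ * (max C 0 * q * (b * c) ^ γ) := by
        gcongr
        exact hYZ.trans <| mul_le_mul (by gcongr; exact le_max_left _ _)
          (integral_rpow_abs_le_of_abs_le_const hγ hZb)
          (integral_nonneg fun _ => by positivity) (by positivity)
    _ = max C 0 * b ^ γ * q := by
        rw [mul_rpow hb hc.le]
        linear_combination (max C 0 * b ^ γ * q) * hcc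

end Moments

section Cubes

variable {d l : ℕ}

lemma card_cubeZ : #(cubeZ d l) = l ^ d := by
  simp [cubeZ, Fintype.card_piFinset, Int.card_Ico]

lemma zero_mem_cubeZ (hl : 0 < l) : 0 ∈ cubeZ d l := by
  simp [cubeZ, Fintype.mem_piFinset, hl]

lemma inv_pow_mul_sum_cubeZ (f : (Fin d → ℤ) → ℝ) :
    ((l : ℝ) ^ d)⁻¹ * ∑ x ∈ cubeZ d l, f x = 𝔼 x ∈ cubeZ d l, f x := by
  rw [expect_eq_sum_div_card, card_cubeZ, inv_mul_eq_div]
  push_cast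
  rfl

lemma measurable_fieldSigma_comp {Ω : Type*} (hl : 0 < l) {T : (Fin d → ℤ) → Ω → Ω}
    (hT0 : T 0 = id) (α0 : Ω → ℝ) {g : ℝ → ℝ} (hg : Measurable g) :
    Measurable[fieldSigma d l T α0] fun ω => g (α0 ω) := by
  have := (hg.comp (measurable_pi_apply ⟨0, zero_mem_cubeZ hl⟩)).comp
    (@comap_measurable _ _ MeasurableSpace.pi
      fun ω (x : {y // y ∈ cubeZ d l}) => α0 (T x.1 ω))
  simp only [Function.comp_def, hT0, id] at this
  exact this

end Cubes

theorem stmt_9_general (d : ℕ) (B : ℝ) (hB : 0 ≤ B)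
    (Ω : Type) [MeasurableSpace Ω] (P : Measure Ω) [IsProbabilityMeasure P]
    -- the stationary (shift-invariant) structure of the random field
    (T : (Fin d → ℤ) → Ω → Ω)
    (hTmp : ∀ x, MeasurePreserving (T x) P P)
    (hT0 : T 0 = id)
    (α0 : Ω → ℝ) (hα0m : Measurable α0) (hα0B : ∀ ω, |α0 ω| ≤ B)
    (γ : ℝ) (hγ : max 4 (2 * ((d : ℝ) + 2) / (d : ℝ) ^ 2) ≤ γ)
    (C0 : ℝ)
    -- the mixing condition
    (hmix : ∀ l : ℕ, 0 < l → ∀ f : Ω → ℝ, Measurable f →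
      Measurable[fieldSigma d l T α0] f → (∫ ω, f ω ∂P) = 0 →
      ∀ K : ℕ, 0 < K →
        (∫ ω, |((K : ℝ) ^ d)⁻¹ * ∑ x ∈ cubeZ d K, f (T x ω)| ^ γ ∂P)
          ≤ C0 * ((l : ℝ) / (K : ℝ)) ^ (γ * d / 2) * ∫ ω, |f ω| ^ γ ∂P) :
    ∃ C : ℝ, ∀ m ∈ Set.Ioo (0 : ℝ) 1, ∀ K : ℕ, 0 < K →
      -- `λ(m)`: the annealed chemical potential
      ∀ lam : ℝ, (∫ ω, Real.exp (α0 ω + lam) / (1 + Real.exp (α0 ω + lam)) ∂P) = m →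
      -- `λ̂_K(m)`: the empirical chemical potential on the cube `Λ_K`
      ∀ lamhat : Ω → ℝ, Measurable lamhat →
        (∀ ω, ((K : ℝ) ^ d)⁻¹ * ∑ x ∈ cubeZ d K,
            Real.exp (lamhat ω + α0 (T x ω)) / (1 + Real.exp (lamhat ω + α0 (T x ω))) = m) →
        (∫ ω, |lamhat ω - lam| ^ γ ∂P) ≤ C * (K : ℝ) ^ (-(γ * d / 2)) := by
  refine ⟨max C0 0 * (2 * B * exp (12 * B)) ^ γ, fun m _ K hK lam hlam lamhat _ hlamhat => ?_⟩
  have hγ0 : 0 ≤ γ := by linarith [(le_max_left _ _).trans hγ]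
  simp only [exp_div_one_add_exp_eq_sigmoid, inv_pow_mul_sum_cubeZ] at hlam hlamhat hmix
  set c := sigmoid (lam - 3 * B) * sigmoid (-(lam + 3 * B))
  set g : ℝ → ℝ := fun t => sigmoid (t + lam) - m
  have hg : Measurable g :=
    (continuous_sigmoid.measurable.comp (measurable_add_const lam)).sub_const m
  have hm := hlam ▸ integral_sigmoid_add_mem_Icc (P := P) hα0m hα0B lam
  have hgα : ∀ ω, |g (α0 ω)| ≤ 2 * B * exp (12 * B) * c := fun ω =>
    abs_sigmoid_add_sub_le (hα0B ω) hm
  have hmean : ∫ ω, g (α0 ω) ∂P = 0 := by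
    rw [integral_sub (integrable_sigmoid_comp (hα0m.add_const lam)) (integrable_const m), hlam,
      integral_const, probReal_univ, one_smul, sub_self]
  have hmix_g := hmix 1 one_pos _ (hg.comp hα0m) (measurable_fieldSigma_comp one_pos hT0 α0 hg)
    hmean K hK
  rw [Nat.cast_one, one_div, inv_rpow (Nat.cast_nonneg K), ← rpow_neg (Nat.cast_nonneg K)]
    at hmix_g
  have hK₀ : (cubeZ d K).Nonempty := ⟨0, zero_mem_cubeZ hK⟩
  exact integral_rpow_abs_le_of_mul_abs_le (mul_pos (sigmoid_pos _) (sigmoid_pos _))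
    (by positivity) (by positivity) hγ0
    (measurable_expect fun x _ => (hg.comp hα0m).comp (hTmp x).measurable)
    (fun ω => (abs_expect_le _ _).trans (expect_le hK₀ fun x _ => hgα (T x ω))) hgα
    (fun ω => mul_abs_sub_le_abs_expect_sigmoid_sub hK₀ (fun x _ => hα0B (T x ω)) hm
      (hlamhat ω)) hmix_g

theorem stmt_9 (d : ℕ) (hd : 0 < d) (B : ℝ) (hB : 0 ≤ B)
    (Ω : Type) [MeasurableSpace Ω] (P : Measure Ω) [IsProbabilityMeasure P]
    -- the stationary (shift-invariant) structure of the random field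
    (T : (Fin d → ℤ) → Ω → Ω)
    (hTmp : ∀ x, MeasurePreserving (T x) P P)
    (hT0 : T 0 = id) (hTadd : ∀ x y, T (x + y) = T x ∘ T y)
    (α0 : Ω → ℝ) (hα0m : Measurable α0) (hα0B : ∀ ω, |α0 ω| ≤ B)
    (γ : ℝ) (hγ : max 4 (2 * ((d : ℝ) + 2) / (d : ℝ) ^ 2) ≤ γ)
    (C0 : ℝ)
    -- the mixing condition
    (hmix : ∀ l : ℕ, 0 < l → ∀ f : Ω → ℝ, Measurable f →
      Measurable[fieldSigma d l T α0] f → (∫ ω, f ω ∂P) = 0 →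
      ∀ K : ℕ, 0 < K →
        (∫ ω, |((K : ℝ) ^ d)⁻¹ * ∑ x ∈ cubeZ d K, f (T x ω)| ^ γ ∂P)
          ≤ C0 * ((l : ℝ) / (K : ℝ)) ^ (γ * d / 2) * ∫ ω, |f ω| ^ γ ∂P) :
    ∃ C : ℝ, ∀ m ∈ Set.Ioo (0 : ℝ) 1, ∀ K : ℕ, 0 < K →
      -- `λ(m)`: the annealed chemical potential
      ∀ lam : ℝ, (∫ ω, Real.exp (α0 ω + lam) / (1 + Real.exp (α0 ω + lam)) ∂P) = m →
      -- `λ̂_K(m)`: the empirical chemical potential on the cube `Λ_K`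
      ∀ lamhat : Ω → ℝ, Measurable lamhat →
        (∀ ω, ((K : ℝ) ^ d)⁻¹ * ∑ x ∈ cubeZ d K,
            Real.exp (lamhat ω + α0 (T x ω)) / (1 + Real.exp (lamhat ω + α0 (T x ω))) = m) →
        (∫ ω, |lamhat ω - lam| ^ γ ∂P) ≤ C * (K : ℝ) ^ (-(γ * d / 2)) :=
  stmt_9_general d B hB Ω P T hTmp hT0 α0 hα0m hα0B γ hγ C0 hmix
end
end

section
/- Let Λ be a finite set, α : Λ → ℝ a field, λ ∈ ℝ, and let P be the grand canonical measure with chemical potential λ on {0,1}^Λ. Set ζ_x = η_x e^{−α_x} and ζ̄_Λ = Av_{x∈Λ} ζ_x. Then for every integer 1 ≤ M ≤ |Λ|, P(Σ_{x∈Λ} η_x = M − 1) / P(Σ_{x∈Λ} η_x = M) = (|Λ|/(|Λ| − M + 1)) · e^{−λ} · E[ ζ̄_Λ | Σ_{x∈Λ} η_x = M ]. -/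
noncomputable section

/-- `η_x` as a real number, for a configuration given by its set of occupied sites. -/
def ind {ι : Type*} [DecidableEq ι] (S : Finset ι) (x : ι) : ℝ := if x ∈ S then 1 else 0

/-- `P(η_x = 1)` for the grand canonical (product) measure with chemical potential `λ`. -/
def pGC {ι : Type*} (α : ι → ℝ) (lam : ℝ) (x : ι) : ℝ :=
  Real.exp (α x + lam) / (1 + Real.exp (α x + lam))

/-- The probability of a configuration under the grand canonical product measure. -/
def wGC {ι : Type*} [Fintype ι] [DecidableEq ι] (α : ι → ℝ) (lam : ℝ) (S : Finset ι) : ℝ :=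
  (∏ x ∈ S, pGC α lam x) * ∏ x ∈ Finset.univ \ S, (1 - pGC α lam x)

/-- `P(∑_{x} η_x = M)`. -/
def PM {ι : Type*} [Fintype ι] [DecidableEq ι] (α : ι → ℝ) (lam : ℝ) (M : ℕ) : ℝ :=
  ∑ S ∈ Finset.univ.powersetCard M, wGC α lam S

/-- `ζ̄_Λ = Av_{x ∈ Λ} η_x e^{-α_x}`. -/
def zetaBar {ι : Type*} [Fintype ι] [DecidableEq ι] (α : ι → ℝ) (S : Finset ι) : ℝ :=
  (Fintype.card ι : ℝ)⁻¹ * ∑ x : ι, ind S x * Real.exp (-α x)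

/-!
Under the product measure, removing an occupied site `x` from a configuration multiplies its
weight by the inverse odds `e^{-(α_x + λ)}`, so `P(S) e^{-α_x} = e^{λ} P(S \ {x})` for `x ∈ S`.
Summing over the `M`-sets `S` and `x ∈ S` and re-indexing by `T = S \ {x}`, every
`(M - 1)`-set `T` is reached from the `|Λ| - M + 1` sites outside it, which gives
`∑_{|S| = M} P(S) ζ̄(S) = |Λ|⁻¹ e^{λ} (|Λ| - M + 1) P(∑ η = M - 1)`.
-/

open Finset

section DoubleCounting

variable {ι R : Type*} [Fintype ι] [DecidableEq ι] [AddCommMonoid R]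

theorem sum_powersetCard_succ_sum_erase (f : Finset ι → R) (m : ℕ) :
    ∑ S ∈ univ.powersetCard (m + 1), ∑ x ∈ S, f (S.erase x)
      = (Fintype.card ι - m) • ∑ T ∈ univ.powersetCard m, f T := by
  have reindex : ∑ S ∈ univ.powersetCard (m + 1), ∑ x ∈ S, f (S.erase x)
      = ∑ T ∈ univ.powersetCard m, ∑ _x ∈ univ \ T, f T := by
    rw [sum_sigma', sum_sigma']
    refine sum_nbij' (fun p ↦ ⟨p.1.erase p.2, p.2⟩) (fun p ↦ ⟨insert p.2 p.1, p.2⟩)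
      ?_ ?_ ?_ ?_ fun _ _ ↦ rfl
    · rintro ⟨S, x⟩ hSx
      simp only [mem_sigma, mem_powersetCard_univ] at hSx ⊢
      simp [card_erase_of_mem hSx.2, hSx.1]
    · rintro ⟨T, x⟩ hTx
      simp only [mem_sigma, mem_powersetCard_univ, mem_sdiff, mem_univ, true_and] at hTx ⊢
      simp [card_insert_of_notMem hTx.2, hTx.1]
    · rintro ⟨S, x⟩ hSx
      simp only [mem_sigma] at hSx
      simp [insert_erase hSx.2]
    · rintro ⟨T, x⟩ hTx
      simp only [mem_sigma, mem_sdiff] at hTx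
      simp [erase_insert hTx.2.2]
  rw [reindex, smul_sum]
  refine sum_congr rfl fun T hT ↦ ?_
  rw [sum_const, card_univ_sdiff, mem_powersetCard_univ.1 hT]

end DoubleCounting

section GrandCanonical

variable {ι : Type*} (α : ι → ℝ) (lam : ℝ)

theorem pGC_eq_exp_mul_one_sub (x : ι) :
    pGC α lam x = Real.exp (α x + lam) * (1 - pGC α lam x) := by
  have : 0 < 1 + Real.exp (α x + lam) := by positivity
  unfold pGC
  field_simp
  ring

variable [Fintype ι] [DecidableEq ι]

theorem wGC_eq_wGC_erase_mul {S : Finset ι} {x : ι} (hx : x ∈ S) :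
    wGC α lam S = wGC α lam (S.erase x) * Real.exp (α x + lam) := by
  unfold wGC
  rw [← mul_prod_erase S _ hx, sdiff_erase (mem_univ x), prod_insert (by simp [hx])]
  linear_combination (∏ y ∈ S.erase x, pGC α lam y) * (∏ y ∈ univ \ S, (1 - pGC α lam y)) *
    pGC_eq_exp_mul_one_sub α lam x

theorem zetaBar_eq_sum (S : Finset ι) :
    zetaBar α S = (Fintype.card ι : ℝ)⁻¹ * ∑ x ∈ S, Real.exp (-α x) := by
  simp [zetaBar, ind, ite_mul, sum_ite_mem]

theorem wGC_mul_zetaBar (S : Finset ι) :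
    wGC α lam S * zetaBar α S
      = (Fintype.card ι : ℝ)⁻¹ * Real.exp lam * ∑ x ∈ S, wGC α lam (S.erase x) := by
  rw [zetaBar_eq_sum, mul_sum, mul_sum, mul_sum]
  refine sum_congr rfl fun x hx ↦ ?_
  rw [wGC_eq_wGC_erase_mul α lam hx, Real.exp_add, Real.exp_neg]
  field_simp

theorem sum_wGC_mul_zetaBar {m : ℕ} (hm : m ≤ Fintype.card ι) :
    ∑ S ∈ univ.powersetCard (m + 1), wGC α lam S * zetaBar α S
      = (Fintype.card ι : ℝ)⁻¹ * Real.exp lam * (Fintype.card ι - m) * PM α lam m := by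
  simp_rw [wGC_mul_zetaBar, ← mul_sum, sum_powersetCard_succ_sum_erase, nsmul_eq_mul,
    Nat.cast_sub hm, PM]
  ring

end GrandCanonical

theorem stmt_11 (ι : Type) [Fintype ι] [DecidableEq ι] (α : ι → ℝ) (lam : ℝ)
    (M : ℕ) (hM : 1 ≤ M) (hMcard : M ≤ Fintype.card ι) :
    PM α lam (M - 1) / PM α lam M
      = ((Fintype.card ι : ℝ) / ((Fintype.card ι : ℝ) - M + 1)) * Real.exp (-lam) *
        ((∑ S ∈ Finset.univ.powersetCard M, wGC α lam S * zetaBar α S) /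
          ∑ S ∈ Finset.univ.powersetCard M, wGC α lam S) := by
  obtain ⟨m, rfl⟩ := Nat.exists_eq_add_of_le' hM
  have hmN : (m : ℝ) + 1 ≤ Fintype.card ι := by exact_mod_cast hMcard
  have hN : (Fintype.card ι : ℝ) ≠ 0 := by linarith
  have hNm : (Fintype.card ι : ℝ) - m ≠ 0 := by linarith
  have hvacant : (Fintype.card ι : ℝ) - ↑(m + 1) + 1 = Fintype.card ι - m := by push_cast; ring
  rw [sum_wGC_mul_zetaBar α lam (by omega), Nat.add_sub_cancel, ← PM, hvacant, Real.exp_neg]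
  field_simp
end
end

section
/- Let B ≥ 0. There exists a constant C = C(B) < ∞ with the following property. Let Λ be a finite set containing two sites x and y, α : Λ → [−B, B] a field and λ ∈ ℝ, and let ⟨·⟩ denote expectation with respect to the measure on {0,1}^Λ proportional to exp(Σ_{z∈Λ} (α_z + λ) η_z), either unconditioned or conditioned on the total particle number. Then for every probability density f (f ≥ 0, ⟨f⟩ = 1), ⟨w_{xy} f⟩ ≤ C ⟨(∇_{xy} √f)²⟩^{1/2}. -/
noncomputable section

/-- The jump rate `a_{xy}(η) = 1 + e^{-(α_y-α_x)(η_y-η_x)}`. -/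
def rate {ι : Type*} [DecidableEq ι] (α : ι → ℝ) (x y : ι) (S : Finset ι) : ℝ :=
  1 + Real.exp (-((α y - α x) * (ind S y - ind S x)))

/-- The current `w_{xy}(η) = a_{xy}(η)(η_y - η_x)`. -/
def curr {ι : Type*} [DecidableEq ι] (α : ι → ℝ) (x y : ι) (S : Finset ι) : ℝ :=
  rate α x y S * (ind S y - ind S x)

/-- Expectation with respect to the (unconditioned) measure on `{0,1}^Λ` proportional to
`exp(∑_{z ∈ Λ} (α_z + λ) η_z)`. -/
def gE {ι : Type*} [Fintype ι] [DecidableEq ι] (α : ι → ℝ) (lam : ℝ)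
    (g : Finset ι → ℝ) : ℝ :=
  (∑ S : Finset ι, Real.exp (∑ z ∈ S, (α z + lam)) * g S) /
    ∑ S : Finset ι, Real.exp (∑ z ∈ S, (α z + lam))

/-- Expectation with respect to that measure conditioned on total particle number `N`. -/
def cEN {ι : Type*} [Fintype ι] [DecidableEq ι] (α : ι → ℝ) (lam : ℝ) (N : ℕ)
    (g : Finset ι → ℝ) : ℝ :=
  (∑ S ∈ Finset.univ.powersetCard N, Real.exp (∑ z ∈ S, (α z + lam)) * g S) /
    ∑ S ∈ Finset.univ.powersetCard N, Real.exp (∑ z ∈ S, (α z + lam))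

/-!
Exchanging `x` and `y` multiplies the Gibbs weight by `e^{(α_x-α_y)(η_y-η_x)}` (detailed
balance), so the weighted current `gibbsWeight · w_{xy}` is odd under `T_{xy}`. On any
`T_{xy}`-invariant set of configurations this gives
`2⟨w_{xy} f⟩ = ⟨w_{xy} (f - f ∘ T_{xy})⟩ = -⟨w_{xy} (√f ∘ T_{xy} + √f) ∇_{xy}√f⟩`,
and Cauchy–Schwarz bounds the right side by
`⟨w_{xy}² (√f ∘ T_{xy} + √f)²⟩^{1/2} ⟨(∇_{xy}√f)²⟩^{1/2}`. As `|w_{xy}| ≤ 1 + e^{2B}` and `T_{xy}`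
distorts the weight by at most `e^{2B}`, the first factor is at most `(2 (1 + e^{2B})³ ⟨f⟩)^{1/2}`.
Both the grand canonical and the canonical ensembles are `T_{xy}`-invariant.
-/

open Finset

lemma sum_mul_mul_le_sqrt_mul_sqrt {κ : Type*} (s : Finset κ) {w : κ → ℝ}
    (hw : ∀ i ∈ s, 0 ≤ w i) (a b : κ → ℝ) :
    ∑ i ∈ s, w i * a i * b i ≤ √(∑ i ∈ s, w i * a i ^ 2) * √(∑ i ∈ s, w i * b i ^ 2) := by
  refine (Real.le_sqrt_of_sq_le ?_).trans_eq
    (Real.sqrt_mul (sum_nonneg fun i hi => mul_nonneg (hw i hi) (sq_nonneg _)) _)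
  exact sum_sq_le_sum_mul_sum_of_sq_le_mul s
    (fun i hi => mul_nonneg (hw i hi) (sq_nonneg _))
    (fun i hi => mul_nonneg (hw i hi) (sq_nonneg _)) (fun i _ => le_of_eq (by ring))

def gibbsWeight {ι : Type*} (α : ι → ℝ) (lam : ℝ) (S : Finset ι) : ℝ :=
  Real.exp (∑ z ∈ S, (α z + lam))

lemma gibbsWeight_pos {ι : Type*} (α : ι → ℝ) (lam : ℝ) (S : Finset ι) :
    0 < gibbsWeight α lam S :=
  Real.exp_pos _

def gibbsAvg {ι : Type*} (𝒜 : Finset (Finset ι)) (α : ι → ℝ) (lam : ℝ)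
    (g : Finset ι → ℝ) : ℝ :=
  (∑ S ∈ 𝒜, gibbsWeight α lam S * g S) / ∑ S ∈ 𝒜, gibbsWeight α lam S

section exchange

variable {ι : Type*} [DecidableEq ι] (x y : ι) (S : Finset ι)

lemma mem_exchV {z : ι} : z ∈ exchV x y S ↔ Equiv.swap x y z ∈ S := by
  simp [exchV, Equiv.swap_apply_eq_iff]

lemma exchV_exchV : exchV x y (exchV x y S) = S := by
  ext z; simp [mem_exchV]

lemma card_exchV : (exchV x y S).card = S.card :=
  card_image_of_injective _ (Equiv.swap x y).injective

lemma ind_exchV_left : ind (exchV x y S) x = ind S y := by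
  simp [ind, mem_exchV]

lemma ind_exchV_right : ind (exchV x y S) y = ind S x := by
  simp [ind, mem_exchV]

lemma abs_ind_sub_ind_le_one : |ind S y - ind S x| ≤ 1 := by
  unfold ind; split_ifs <;> norm_num

lemma sum_exchV (β : ι → ℝ) :
    ∑ z ∈ exchV x y S, β z = ∑ z ∈ S, β z + (β x - β y) * (ind S y - ind S x) := by
  rw [exchV, sum_image fun a _ b _ h => (Equiv.swap x y).injective h]
  rcases eq_or_ne x y with rfl | hxy
  · simp
  have hswap : ∀ z, β (Equiv.swap x y z)
      = β z + ((β y - β x) * (if z = x then 1 else 0)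
        + (β x - β y) * (if z = y then 1 else 0)) := by
    intro z
    rcases eq_or_ne z x with rfl | hzx
    · simp [hxy]
    rcases eq_or_ne z y with rfl | hzy
    · simp [hzx]
    · simp [Equiv.swap_apply_of_ne_of_ne hzx hzy, hzx, hzy]
  simp only [hswap, sum_add_distrib, mul_ite, mul_one, mul_zero, sum_ite_eq', ind]
  split_ifs <;> ring

variable (α : ι → ℝ) (lam : ℝ)

lemma gibbsWeight_exchV :
    gibbsWeight α lam (exchV x y S)
      = gibbsWeight α lam S * Real.exp ((α x - α y) * (ind S y - ind S x)) := by
  rw [gibbsWeight, gibbsWeight, ← Real.exp_add, sum_exchV]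
  congr 1
  ring

lemma gibbsWeight_mul_curr_exchV :
    gibbsWeight α lam (exchV x y S) * curr α x y (exchV x y S)
      = -(gibbsWeight α lam S * curr α x y S) := by
  set e := (α x - α y) * (ind S y - ind S x)
  have hinv : Real.exp e * Real.exp (-e) = 1 := by
    rw [← Real.exp_add, add_neg_cancel, Real.exp_zero]
  rw [gibbsWeight_exchV, curr, curr, rate, rate, ind_exchV_left, ind_exchV_right,
    show -((α y - α x) * (ind S x - ind S y)) = -e by ring,
    show -((α y - α x) * (ind S y - ind S x)) = e by ring]
  linear_combination (-(gibbsWeight α lam S * (ind S y - ind S x))) * hinv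

variable {α} {B : ℝ} (hα : ∀ z, |α z| ≤ B)
include hα

lemma exchange_exponent_le : (α x - α y) * (ind S y - ind S x) ≤ 2 * B :=
  calc (α x - α y) * (ind S y - ind S x) ≤ |α x - α y| * |ind S y - ind S x| :=
        (le_abs_self _).trans (abs_mul _ _).le
    _ ≤ (|α x| + |α y|) * 1 := by
        gcongr
        · exact abs_sub _ _
        · exact abs_ind_sub_ind_le_one x y S
    _ ≤ 2 * B := by linarith [hα x, hα y]

lemma abs_curr_le : |curr α x y S| ≤ 1 + Real.exp (2 * B) := by
  have hexp : Real.exp (-((α y - α x) * (ind S y - ind S x))) ≤ Real.exp (2 * B) :=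
    Real.exp_le_exp.2 (by linarith [exchange_exponent_le x y S hα])
  rw [curr, abs_mul, rate, abs_of_pos (by positivity)]
  calc (1 + Real.exp (-((α y - α x) * (ind S y - ind S x)))) * |ind S y - ind S x|
      ≤ (1 + Real.exp (2 * B)) * 1 := by
        gcongr
        exact abs_ind_sub_ind_le_one x y S
    _ = 1 + Real.exp (2 * B) := mul_one _

end exchange

section invariantFamily

variable {ι : Type*} [DecidableEq ι] {x y : ι} {𝒜 : Finset (Finset ι)}
  (h𝒜 : ∀ S ∈ 𝒜, exchV x y S ∈ 𝒜)
include h𝒜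

lemma sum_comp_exchV (F : Finset ι → ℝ) : ∑ S ∈ 𝒜, F (exchV x y S) = ∑ S ∈ 𝒜, F S :=
  sum_nbij' (exchV x y) (exchV x y) h𝒜 h𝒜 (fun S _ => exchV_exchV x y S)
    (fun S _ => exchV_exchV x y S) (fun _ _ => rfl)

variable (α : ι → ℝ) (lam : ℝ)

lemma two_mul_sum_gibbsWeight_curr (f : Finset ι → ℝ) :
    2 * ∑ S ∈ 𝒜, gibbsWeight α lam S * (curr α x y S * f S)
      = ∑ S ∈ 𝒜, gibbsWeight α lam S * (curr α x y S * (f S - f (exchV x y S))) := by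
  have hrefl : ∑ S ∈ 𝒜, gibbsWeight α lam S * (curr α x y S * f (exchV x y S))
      = -∑ S ∈ 𝒜, gibbsWeight α lam S * (curr α x y S * f S) := by
    rw [← sum_comp_exchV h𝒜, ← sum_neg_distrib]
    refine sum_congr rfl fun S _ => ?_
    rw [exchV_exchV, ← mul_assoc, gibbsWeight_mul_curr_exchV]
    ring
  simp only [mul_sub, sum_sub_distrib, hrefl]
  ring

variable {α} {B : ℝ} (hα : ∀ z, |α z| ≤ B)
include hα

lemma sum_gibbsWeight_mul_comp_exchV_le {f : Finset ι → ℝ} (hf : ∀ S, 0 ≤ f S) :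
    ∑ S ∈ 𝒜, gibbsWeight α lam S * f (exchV x y S)
      ≤ Real.exp (2 * B) * ∑ S ∈ 𝒜, gibbsWeight α lam S * f S := by
  rw [← sum_comp_exchV h𝒜, mul_sum]
  refine sum_le_sum fun S _ => ?_
  rw [exchV_exchV, gibbsWeight_exchV, mul_right_comm, mul_comm _ (Real.exp _)]
  exact mul_le_mul_of_nonneg_right (Real.exp_le_exp.2 (exchange_exponent_le x y S hα))
    (mul_nonneg (gibbsWeight_pos α lam S).le (hf S))

theorem sum_gibbsWeight_curr_mul_le {f : Finset ι → ℝ} (hf : ∀ S, 0 ≤ f S) :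
    ∑ S ∈ 𝒜, gibbsWeight α lam S * (curr α x y S * f S)
      ≤ √(2 * (1 + Real.exp (2 * B)) ^ 3 * ∑ S ∈ 𝒜, gibbsWeight α lam S * f S) *
        √(∑ S ∈ 𝒜, gibbsWeight α lam S * gradV x y (fun S' => √(f S')) S ^ 2) := by
  set g := gradV x y (fun S' => √(f S'))
  set r : Finset ι → ℝ := fun S => √(f (exchV x y S)) + √(f S)
  have hw : ∀ S ∈ 𝒜, 0 ≤ gibbsWeight α lam S := fun S _ => (gibbsWeight_pos α lam S).le
  have hdiff : ∀ S, f S - f (exchV x y S) = r S * -g S := fun S => by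
    simp only [g, r, gradV]
    linear_combination Real.sq_sqrt (hf (exchV x y S)) - Real.sq_sqrt (hf S)
  have hCS : 2 * ∑ S ∈ 𝒜, gibbsWeight α lam S * (curr α x y S * f S)
      ≤ √(∑ S ∈ 𝒜, gibbsWeight α lam S * (curr α x y S * r S) ^ 2) *
        √(∑ S ∈ 𝒜, gibbsWeight α lam S * g S ^ 2) := by
    have h := sum_mul_mul_le_sqrt_mul_sqrt 𝒜 hw (fun S => curr α x y S * r S) (fun S => -g S)
    simp only [neg_sq] at h
    rw [two_mul_sum_gibbsWeight_curr h𝒜]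
    refine le_of_eq_of_le (sum_congr rfl fun S _ => ?_) h
    rw [hdiff]
    ring
  have hpoint : ∀ S ∈ 𝒜, gibbsWeight α lam S * (curr α x y S * r S) ^ 2
      ≤ 2 * (1 + Real.exp (2 * B)) ^ 2 *
        (gibbsWeight α lam S * f (exchV x y S) + gibbsWeight α lam S * f S) := fun S hS => by
    have hc := abs_le.1 (abs_curr_le x y S hα)
    have hr : r S ^ 2 ≤ 2 * (f (exchV x y S) + f S) := by
      have := add_sq_le (a := √(f (exchV x y S))) (b := √(f S))
      rwa [Real.sq_sqrt (hf _), Real.sq_sqrt (hf _)] at this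
    calc gibbsWeight α lam S * (curr α x y S * r S) ^ 2
        = gibbsWeight α lam S * (curr α x y S ^ 2 * r S ^ 2) := by ring
      _ ≤ gibbsWeight α lam S * ((1 + Real.exp (2 * B)) ^ 2 * (2 * (f (exchV x y S) + f S))) :=
          mul_le_mul_of_nonneg_left
            (mul_le_mul (sq_le_sq' hc.1 hc.2) hr (sq_nonneg _) (sq_nonneg _)) (hw S hS)
      _ = _ := by ring
  have hU : ∑ S ∈ 𝒜, gibbsWeight α lam S * (curr α x y S * r S) ^ 2
      ≤ 2 * (1 + Real.exp (2 * B)) ^ 3 * ∑ S ∈ 𝒜, gibbsWeight α lam S * f S :=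
    calc _ ≤ ∑ S ∈ 𝒜, 2 * (1 + Real.exp (2 * B)) ^ 2 *
            (gibbsWeight α lam S * f (exchV x y S) + gibbsWeight α lam S * f S) :=
          sum_le_sum hpoint
      _ = 2 * (1 + Real.exp (2 * B)) ^ 2 * (∑ S ∈ 𝒜, gibbsWeight α lam S * f (exchV x y S)
            + ∑ S ∈ 𝒜, gibbsWeight α lam S * f S) := by rw [← mul_sum, sum_add_distrib]
      _ ≤ 2 * (1 + Real.exp (2 * B)) ^ 2 * (Real.exp (2 * B) * ∑ S ∈ 𝒜, gibbsWeight α lam S * f S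
            + ∑ S ∈ 𝒜, gibbsWeight α lam S * f S) := by
          gcongr
          exact sum_gibbsWeight_mul_comp_exchV_le h𝒜 lam hα hf
      _ = _ := by ring
  have hR : 0 ≤ √(2 * (1 + Real.exp (2 * B)) ^ 3 * ∑ S ∈ 𝒜, gibbsWeight α lam S * f S) *
      √(∑ S ∈ 𝒜, gibbsWeight α lam S * g S ^ 2) := by positivity
  linarith [hCS.trans (mul_le_mul_of_nonneg_right (Real.sqrt_le_sqrt hU) (Real.sqrt_nonneg _))]

theorem gibbsAvg_curr_le {f : Finset ι → ℝ} (hf : ∀ S, 0 ≤ f S) (hnorm : gibbsAvg 𝒜 α lam f = 1) :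
    gibbsAvg 𝒜 α lam (fun S => curr α x y S * f S)
      ≤ √(2 * (1 + Real.exp (2 * B)) ^ 3) *
        √(gibbsAvg 𝒜 α lam fun S => gradV x y (fun S' => √(f S')) S ^ 2) := by
  unfold gibbsAvg at hnorm ⊢
  set Z := ∑ S ∈ 𝒜, gibbsWeight α lam S
  have hZ : Z ≠ 0 := fun h => by simp [h] at hnorm
  have hZpos : 0 < Z :=
    (sum_nonneg fun S _ => (gibbsWeight_pos α lam S).le).lt_of_ne' hZ
  have hF : ∑ S ∈ 𝒜, gibbsWeight α lam S * f S = Z := (div_eq_one_iff_eq hZ).1 hnorm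
  have h := sum_gibbsWeight_curr_mul_le h𝒜 lam hα hf
  rw [hF, Real.sqrt_mul (by positivity)] at h
  refine (div_le_div_of_nonneg_right h hZpos.le).trans_eq ?_
  rw [Real.sqrt_div' _ hZpos.le]
  field_simp
  rw [Real.sq_sqrt hZpos.le, mul_comm]

end invariantFamily

theorem stmt_15_general (B : ℝ) :
    ∃ C : ℝ, ∀ (ι : Type) [Fintype ι] [DecidableEq ι],
      ∀ (α : ι → ℝ) (lam : ℝ) (x y : ι), (∀ z : ι, |α z| ≤ B) →
      (∀ f : Finset ι → ℝ, (∀ S, 0 ≤ f S) → gE α lam f = 1 →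
        gE α lam (fun S => curr α x y S * f S)
          ≤ C * Real.sqrt
              (gE α lam fun S => (gradV x y (fun S' => Real.sqrt (f S')) S) ^ 2)) ∧
      ∀ N : ℕ, ∀ f : Finset ι → ℝ, (∀ S, 0 ≤ f S) → cEN α lam N f = 1 →
        cEN α lam N (fun S => curr α x y S * f S)
          ≤ C * Real.sqrt
              (cEN α lam N fun S => (gradV x y (fun S' => Real.sqrt (f S')) S) ^ 2) := by
  refine ⟨√(2 * (1 + Real.exp (2 * B)) ^ 3), fun ι _ _ α lam x y hα => ⟨?_, fun N => ?_⟩⟩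
  · exact fun f hf hnorm => gibbsAvg_curr_le (fun S _ => mem_univ _) lam hα hf hnorm
  · have hinv : ∀ S ∈ (univ : Finset ι).powersetCard N, exchV x y S ∈ univ.powersetCard N :=
      fun S hS => by rw [mem_powersetCard_univ] at hS ⊢; rw [card_exchV, hS]
    exact fun f hf hnorm => gibbsAvg_curr_le hinv lam hα hf hnorm

theorem stmt_15 (B : ℝ) (hB : 0 ≤ B) :
    ∃ C : ℝ, ∀ (ι : Type) [Fintype ι] [DecidableEq ι],
      ∀ (α : ι → ℝ) (lam : ℝ) (x y : ι), (∀ z : ι, |α z| ≤ B) →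
      (∀ f : Finset ι → ℝ, (∀ S, 0 ≤ f S) → gE α lam f = 1 →
        gE α lam (fun S => curr α x y S * f S)
          ≤ C * Real.sqrt
              (gE α lam fun S => (gradV x y (fun S' => Real.sqrt (f S')) S) ^ 2)) ∧
      ∀ N : ℕ, ∀ f : Finset ι → ℝ, (∀ S, 0 ≤ f S) → cEN α lam N f = 1 →
        cEN α lam N (fun S => curr α x y S * f S)
          ≤ C * Real.sqrt
              (cEN α lam N fun S => (gradV x y (fun S' => Real.sqrt (f S')) S) ^ 2) :=
  stmt_15_general B
end
end
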